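/- arXiv:0912.0223 — 8 statements merged into one kernel-verified Lean document; each statement's English description precedes it below -/
import Mathlib

section
/- Let k ≥ 1 and let x, y ∈ E with ‖x‖ ≠ ‖y‖ (so in particular x ≠ y). Suppose y* ∈ E satisfies ‖y*‖ = ‖y‖, y* ≠ y, and y* lies on the line through x and y (i.e. y* = x + t • (y − x) for some real t). Then |‖x‖² − ‖y‖²| / ‖x − y‖² = ‖x − y*‖ / ‖x − y‖. (Geometric interpretation of the two dimensional Poisson kernel: ω(x,y) = l/q, where q = |x−y| and l = |x−y*| with y* the second intersection of the line xy with the sphere of radius ‖y‖ centered at the origin.) -/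
/-!
The number `‖x‖² − ‖y‖²` is the power of `x` with respect to the sphere of radius `‖y‖` about
the origin, and `y`, `y*` are the two points where a line through `x` meets that sphere. By the
power of a point theorem `‖x − y‖ ‖x − y*‖ = |‖x‖² − ‖y‖²|`; divide by `‖x − y‖²`.
-/

open EuclideanGeometry

variable {V P : Type*} [NormedAddCommGroup V] [InnerProductSpace ℝ V] [MetricSpace P]
  [NormedAddTorsor V P]

theorem mem_affineSpan_pair_lineMap_of_ne {p q : P} {t : ℝ}
    (h : AffineMap.lineMap p q t ≠ q) : p ∈ line[ℝ, q, AffineMap.lineMap p q t] :=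
  (collinear_insert_insert_of_mem_affineSpan_pair (AffineMap.lineMap_mem_affineSpan_pair t p q)
    (right_mem_affineSpan_pair ℝ p q)).mem_affineSpan_of_mem_of_ne (by simp) (by simp) (by simp)
    h.symm

theorem EuclideanGeometry.Sphere.abs_power_div_dist_sq {s : Sphere P} {p a b : P}
    (hp : p ∈ line[ℝ, a, b]) (ha : a ∈ s) (hb : b ∈ s) (hpa : p ≠ a) :
    |s.power p| / dist p a ^ 2 = dist p b / dist p a := by
  have := dist_pos.mpr hpa
  rw [← s.mul_dist_eq_abs_power hp ha hb]
  field_simp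

theorem poisson_kernel_geometric_interpretation_general
    (k : ℕ) (x y ystar : EuclideanSpace ℝ (Fin (k + 1)))
    (hxy : ‖x‖ ≠ ‖y‖) (hys : ‖ystar‖ = ‖y‖) (hne : ystar ≠ y)
    (hline : ∃ t : ℝ, ystar = x + t • (y - x)) :
    |‖x‖ ^ 2 - ‖y‖ ^ 2| / ‖x - y‖ ^ 2 = ‖x - ystar‖ / ‖x - y‖ := by
  obtain ⟨t, rfl⟩ := hline
  have hmap : AffineMap.lineMap x y t = x + t • (y - x) :=
    (AffineMap.lineMap_apply_module' x y t).trans (add_comm _ _)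
  let s : Sphere (EuclideanSpace ℝ (Fin (k + 1))) := ⟨0, ‖y‖⟩
  have hy : y ∈ s := mem_sphere.mpr (dist_zero_right y)
  have hystar : x + t • (y - x) ∈ s := mem_sphere.mpr ((dist_zero_right _).trans hys)
  have hx : x ∈ line[ℝ, y, x + t • (y - x)] :=
    hmap ▸ mem_affineSpan_pair_lineMap_of_ne (hmap ▸ hne)
  have hxy' : x ≠ y := fun h => hxy (congrArg norm h)
  simpa [s, Sphere.power, dist_eq_norm] using s.abs_power_div_dist_sq hx hy hystar hxy'

/-- Geometric interpretation of the two-dimensional Poisson kernel: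
`ω(x,y) = |‖x‖² − ‖y‖²| / ‖x − y‖² = l/q`, where `q = ‖x − y‖` and `l = ‖x − y*‖`,
with `y*` the second intersection of the line through `x` and `y` with the sphere
of radius `‖y‖` centered at the origin. -/
theorem poisson_kernel_geometric_interpretation
    (k : ℕ) (hk : 1 ≤ k) (x y ystar : EuclideanSpace ℝ (Fin (k + 1)))
    (hxy : ‖x‖ ≠ ‖y‖) (hys : ‖ystar‖ = ‖y‖) (hne : ystar ≠ y)
    (hline : ∃ t : ℝ, ystar = x + t • (y - x)) :
    |‖x‖ ^ 2 - ‖y‖ ^ 2| / ‖x - y‖ ^ 2 = ‖x - ystar‖ / ‖x - y‖ :=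
  poisson_kernel_geometric_interpretation_general k x y ystar hxy hys hne hline
end

section
/- Let k ≥ 1, let x, y ∈ E with y ≠ 0, let c ∈ ℝ with c ≠ 1, and set T = c • y (a point on the line through the origin and y, T ≠ y). If ‖x − T‖ = ‖T − y‖ and x ≠ y, then |‖x‖² − ‖y‖²| / ‖x − y‖² = ‖T‖ / ‖T − y‖. In other words, ω(·, y) is constant, with value ‖T‖/‖T−y‖, on the sphere centered at T of radius ‖T − y‖ (which is tangent to the sphere of radius ‖y‖ at the point y), punctured at y. -/
/-!
Expanding the squared norms in `⟪x, y⟫`, the sphere condition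
`‖x - c • y‖² = (c - 1)² ‖y‖²` becomes the identity `(c - 1) (‖x‖² - ‖y‖²) = c ‖x - y‖²`,
so the ratio `|‖x‖² - ‖y‖²| / ‖x - y‖²` is `|c| / |c - 1| = ‖c • y‖ / ‖c • y - y‖`.
-/

section TangentSphere

variable {E : Type*} [NormedAddCommGroup E] [InnerProductSpace ℝ E] {x y : E} {c : ℝ}

theorem norm_smul_sub_self : ‖c • y - y‖ = |c - 1| * ‖y‖ := by
  rw [← Real.norm_eq_abs, ← norm_smul, sub_smul, one_smul]

theorem sub_one_mul_norm_sq_sub_norm_sq_of_norm_sub_smul_eq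
    (h : ‖x - c • y‖ = ‖c • y - y‖) :
    (c - 1) * (‖x‖ ^ 2 - ‖y‖ ^ 2) = c * ‖x - y‖ ^ 2 := by
  have hsq : ‖x - c • y‖ ^ 2 = ‖c • y - y‖ ^ 2 := by rw [h]
  rw [norm_smul_sub_self, norm_sub_sq_real, real_inner_smul_right, norm_smul, Real.norm_eq_abs,
    mul_pow, mul_pow, sq_abs, sq_abs] at hsq
  rw [norm_sub_sq_real]
  linear_combination -hsq

theorem abs_norm_sq_sub_norm_sq_mul_of_norm_sub_smul_eq
    (h : ‖x - c • y‖ = ‖c • y - y‖) :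
    |‖x‖ ^ 2 - ‖y‖ ^ 2| * ‖c • y - y‖ = ‖c • y‖ * ‖x - y‖ ^ 2 := by
  have habs := congrArg abs (sub_one_mul_norm_sq_sub_norm_sq_of_norm_sub_smul_eq h)
  rw [abs_mul, abs_mul, abs_of_nonneg (by positivity : (0 : ℝ) ≤ ‖x - y‖ ^ 2)] at habs
  rw [norm_smul_sub_self, norm_smul, Real.norm_eq_abs]
  linear_combination ‖y‖ * habs

end TangentSphere

theorem omega_constant_on_tangent_sphere_general
    (k : ℕ) (x y : EuclideanSpace ℝ (Fin (k + 1)))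
    (c : ℝ)
    (hsphere : ‖x - c • y‖ = ‖c • y - y‖) (hxy : x ≠ y) :
    |‖x‖ ^ 2 - ‖y‖ ^ 2| / ‖x - y‖ ^ 2 = ‖c • y‖ / ‖c • y - y‖ := by
  have hxy_norm : ‖x - y‖ ^ 2 ≠ 0 := pow_ne_zero 2 (norm_ne_zero_iff.mpr (sub_ne_zero.mpr hxy))
  have hradius : ‖c • y - y‖ ≠ 0 := by
    intro h0
    have hx : x = c • y := sub_eq_zero.mp (norm_eq_zero.mp (hsphere.trans h0))
    exact hxy (hx.trans (sub_eq_zero.mp (norm_eq_zero.mp h0)))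
  rw [div_eq_div_iff hxy_norm hradius]
  exact abs_norm_sq_sub_norm_sq_mul_of_norm_sub_smul_eq hsphere

/-- `ω(·, y)` is constant, with value `‖T‖ / ‖T − y‖`, on the sphere centered at
`T = c • y` (a point on the line `Oy`, `T ≠ y`) of radius `‖T − y‖`, punctured at `y`. -/
theorem omega_constant_on_tangent_sphere
    (k : ℕ) (hk : 1 ≤ k) (x y : EuclideanSpace ℝ (Fin (k + 1))) (hy : y ≠ 0)
    (c : ℝ) (hc : c ≠ 1)
    (hsphere : ‖x - c • y‖ = ‖c • y - y‖) (hxy : x ≠ y) :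
    |‖x‖ ^ 2 - ‖y‖ ^ 2| / ‖x - y‖ ^ 2 = ‖c • y‖ / ‖c • y - y‖ :=
  omega_constant_on_tangent_sphere_general k x y c hsphere hxy
end

section
/- (Sphere exchange rule.) Let k ≥ 1, let r, R > 0, let x, y ∈ E with ‖x‖ = r and ‖y‖ = R, and let g : ℝ → ℝ be continuous on the interval [|R − r|, R + r]. Then R^k · ∫_{x₁ ∈ S^k(r)} g(‖x₁ − y‖) dμH[k](x₁) = r^k · ∫_{y₁ ∈ S^k(R)} g(‖x − y₁‖) dμH[k](y₁). -/
/-!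
Put `c = R / r` and let `T` be the reflection exchanging `c • x` and `y`. For `‖v‖ = r`,
expanding both squared norms gives `‖x - c • T v‖ = ‖v - y‖`, so the left integrand is the
right one pulled back along `v ↦ c • T v`, which maps `S^k(r)` onto `S^k(R)`. The reflection
preserves `μH[k]` and the dilation by `c` multiplies it by `c ^ k = (R / r) ^ k`.
-/

open MeasureTheory
open scoped RealInnerProductSpace NNReal Pointwise

section HausdorffIntegral

variable {𝕜 E F : Type*} [NormedField 𝕜] [NormedAddCommGroup E] [NormedSpace 𝕜 E]
  [MeasurableSpace E] [BorelSpace E] [NormedAddCommGroup F] [NormedSpace ℝ F]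

theorem map_smul_hausdorffMeasure {d : ℝ} (hd : 0 ≤ d) {c : 𝕜} (hc : c ≠ 0) :
    Measure.map (c • · : E → E) μH[d] = (‖c‖₊⁻¹ ^ d : ℝ≥0) • μH[d] := by
  have hhom : ⇑(AffineMap.homothety (0 : E) c) = (c • ·) := by
    ext v; simp [AffineMap.homothety_apply]
  rw [← hhom, map_homothety_hausdorffMeasure hd 0 hc]

theorem setIntegral_comp_smul_hausdorffMeasure {d : ℝ} (hd : 0 ≤ d) {c : 𝕜} (hc : c ≠ 0)
    (f : E → F) (s : Set E) :
    ‖c‖ ^ d • ∫ v in s, f (c • v) ∂μH[d] = ∫ w in c • s, f w ∂μH[d] := by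
  have hemb : MeasurableEmbedding (c • · : E → E) :=
    (Homeomorph.smulOfNeZero c hc).measurableEmbedding
  have hpre : (c • · : E → E) ⁻¹' (c • s) = s := by
    rw [Set.preimage_smul₀ hc, inv_smul_smul₀ hc]
  have := hemb.setIntegral_map (μ := μH[d]) f (c • s)
  rw [map_smul_hausdorffMeasure hd hc, Measure.restrict_smul, integral_smul_nnreal_measure,
    hpre] at this
  rw [← this, NNReal.smul_def, smul_smul, NNReal.coe_rpow, NNReal.coe_inv, coe_nnnorm,
    ← Real.mul_rpow (norm_nonneg c) (inv_nonneg.mpr (norm_nonneg c)),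
    mul_inv_cancel₀ (norm_ne_zero_iff.mpr hc), Real.one_rpow, one_smul]

theorem setIntegral_sphere_comp_linearIsometryEquiv (d : ℝ) (T : E ≃ₗᵢ[𝕜] E) (f : E → F)
    (r : ℝ) : ∫ v in Metric.sphere 0 r, f (T v) ∂μH[d] = ∫ v in Metric.sphere 0 r, f v ∂μH[d] := by
  have := (T.toIsometryEquiv.measurePreserving_hausdorffMeasure d).setIntegral_preimage_emb
    T.toHomeomorph.measurableEmbedding f (Metric.sphere 0 r)
  simpa [T.preimage_sphere] using this

end HausdorffIntegral

theorem exists_linearIsometryEquiv_norm_sub_smul_apply_eq {F : Type*} [NormedAddCommGroup F]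
    [InnerProductSpace ℝ F] {x y : F} {c : ℝ} (hxy : ‖c • x‖ = ‖y‖) :
    ∃ T : F ≃ₗᵢ[ℝ] F, ∀ v, ‖v‖ = ‖x‖ → ‖x - c • T v‖ = ‖v - y‖ := by
  set T := Submodule.reflection (ℝ ∙ (c • x - y))ᗮ
  refine ⟨T, fun v hv => ?_⟩
  have hTx : T (c • x) = y := Submodule.reflection_sub hxy
  have hinner : ⟪x, c • T v⟫ = ⟪v, y⟫ := by
    rw [real_inner_smul_right, ← real_inner_smul_left, ← T.inner_map_map, hTx,
      Submodule.reflection_reflection, real_inner_comm]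
  have hnorm : ‖c • T v‖ = ‖y‖ := by
    rw [← hxy, norm_smul, norm_smul, T.norm_map, hv]
  rw [← sq_eq_sq₀ (norm_nonneg _) (norm_nonneg _), norm_sub_sq_real, norm_sub_sq_real, hinner,
    hnorm, hv]

theorem sphere_exchange_rule_general
    (k : ℕ) (r R : ℝ) (hr : 0 < r) (hR : 0 < R)
    (x y : EuclideanSpace ℝ (Fin (k + 1))) (hx : ‖x‖ = r) (hy : ‖y‖ = R)
    (g : ℝ → ℝ) :
    R ^ k * ∫ x₁ in Metric.sphere (0 : EuclideanSpace ℝ (Fin (k + 1))) r,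
        g ‖x₁ - y‖ ∂μH[k]
      = r ^ k * ∫ y₁ in Metric.sphere (0 : EuclideanSpace ℝ (Fin (k + 1))) R,
        g ‖x - y₁‖ ∂μH[k] := by
  set c : ℝ := R / r
  have hc : 0 < c := div_pos hR hr
  have hcr : c * r = R := div_mul_cancel₀ R hr.ne'
  obtain ⟨T, hT⟩ := exists_linearIsometryEquiv_norm_sub_smul_apply_eq (x := x) (y := y) (c := c)
    (by rw [norm_smul, Real.norm_of_nonneg hc.le, hx, hcr, hy])
  have hsphere : c • Metric.sphere (0 : EuclideanSpace ℝ (Fin (k + 1))) r = Metric.sphere 0 R := by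
    rw [smul_sphere' hc.ne', smul_zero, Real.norm_of_nonneg hc.le, hcr]
  calc R ^ k * ∫ v in Metric.sphere 0 r, g ‖v - y‖ ∂μH[k]
      = R ^ k * ∫ v in Metric.sphere 0 r, g ‖x - c • T v‖ ∂μH[k] := by
        refine congrArg _ <|
          setIntegral_congr_fun Metric.isClosed_sphere.measurableSet fun v hv => ?_
        rw [hT v (by rw [mem_sphere_zero_iff_norm.mp hv, hx])]
    _ = r ^ k * (‖c‖ ^ (k : ℝ) • ∫ v in Metric.sphere 0 r, g ‖x - c • v‖ ∂μH[k]) := by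
        rw [setIntegral_sphere_comp_linearIsometryEquiv _ T (fun w => g ‖x - c • w‖),
          Real.norm_of_nonneg hc.le, Real.rpow_natCast, smul_eq_mul, ← mul_assoc, ← mul_pow,
          mul_comm r c, hcr]
    _ = r ^ k * ∫ w in Metric.sphere 0 R, g ‖x - w‖ ∂μH[k] := by
        rw [setIntegral_comp_smul_hausdorffMeasure k.cast_nonneg hc.ne' (fun w => g ‖x - w‖),
          hsphere]

/-- Sphere exchange rule:
`R^k ∫_{S^k(r)} g(‖x₁ − y‖) = r^k ∫_{S^k(R)} g(‖x − y₁‖)` for `‖x‖ = r`, `‖y‖ = R`. -/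
theorem sphere_exchange_rule
    (k : ℕ) (hk : 1 ≤ k) (r R : ℝ) (hr : 0 < r) (hR : 0 < R)
    (x y : EuclideanSpace ℝ (Fin (k + 1))) (hx : ‖x‖ = r) (hy : ‖y‖ = R)
    (g : ℝ → ℝ) (hg : ContinuousOn g (Set.Icc |R - r| (R + r))) :
    R ^ k * ∫ x₁ in Metric.sphere (0 : EuclideanSpace ℝ (Fin (k + 1))) r,
        g ‖x₁ - y‖ ∂μH[k]
      = r ^ k * ∫ y₁ in Metric.sphere (0 : EuclideanSpace ℝ (Fin (k + 1))) R,
        g ‖x - y₁‖ ∂μH[k] :=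
  sphere_exchange_rule_general k r R hr hR x y hx hy g
end

section
/- Let k ≥ 1, R > 0, and x ∈ E with ‖x‖ ≠ R. If α, β ∈ ℂ satisfy α + β = 2k, then ∫_{y ∈ S^k(R)} (‖x − y‖ : ℂ)^{−α} dμH[k](y) = (|R² − ‖x‖²| : ℂ)^{(β−α)/2} · ∫_{y ∈ S^k(R)} (‖x − y‖ : ℂ)^{−β} dμH[k](y), where all powers are complex powers (Complex.cpow) of positive real bases. -/
/-!
Put `p = ‖x‖² - R²` and `ρ y = |p| / ‖y - x‖²`. The signed inversion
`J y = x + p (y - x) / ‖y - x‖²` is an involution of the sphere with `‖x - J y‖ = |p| / ‖x - y‖` and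
`dist (J y) (J z)² = ρ y * ρ z * dist y z²`. A map distorting distances in this Möbius fashion
multiplies `d`-dimensional Hausdorff measure by the density `ρ ^ d`: on a piece where `ρ` varies
by a factor at most `q` it is Lipschitz and co-Lipschitz with constants of ratio `q`, and `q → 1`.
Substituting `y ↦ J y` turns `∫ ‖x - y‖ ^ (-α)` into `∫ ρ y ^ k * (|p| / ‖x - y‖) ^ (-α)`, whose
integrand is `|p| ^ ((β - α) / 2) * ‖x - y‖ ^ (-β)` precisely because `α + β = 2k`.
-/

open MeasureTheory Metric Set Filter Topology Function
open scoped ENNReal NNReal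

theorem ENNReal.le_of_forall_one_lt_le_rpow_mul {a b : ℝ≥0∞} {d : ℝ}
    (h : ∀ q : ℝ≥0, 1 < q → a ≤ (q : ℝ≥0∞) ^ d * b) : a ≤ b := by
  rcases eq_or_ne b ∞ with rfl | hb
  · exact le_top
  have hcont : Continuous fun q : ℝ≥0 => (q : ℝ≥0∞) ^ d * b := by fun_prop (disch := assumption)
  have hq : Tendsto (fun q : ℝ≥0 => (q : ℝ≥0∞) ^ d * b) (𝓝[>] 1) (𝓝 b) := by
    simpa using (hcont.tendsto 1).mono_left nhdsWithin_le_nhds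
  exact ge_of_tendsto hq (eventually_nhdsWithin_of_forall h)

section ScalesDist

variable {X Y : Type*} [MetricSpace X] [MetricSpace Y]

/-- Möbius transformations satisfy this with `g = ‖f'‖`. -/
def ScalesDistOn (f : X → Y) (g : X → ℝ≥0) (s : Set X) : Prop :=
  ∀ y ∈ s, ∀ z ∈ s, dist (f y) (f z) ^ 2 = g y * g z * dist y z ^ 2

variable {f : X → Y} {g : X → ℝ≥0} {s t : Set X}

namespace ScalesDistOn

theorem mono (h : ScalesDistOn f g s) (hts : t ⊆ s) : ScalesDistOn f g t :=
  fun y hy z hz => h y (hts hy) z (hts hz)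

theorem lipschitzOnWith {C : ℝ≥0} (h : ScalesDistOn f g s) (hC : ∀ y ∈ s, g y ≤ C) :
    LipschitzOnWith C f s := by
  refine LipschitzOnWith.of_dist_le_mul fun y hy z hz => ?_
  have hgg : (g y * g z : ℝ) ≤ C * C :=
    mul_le_mul (hC y hy) (hC z hz) (by positivity) (by positivity)
  refine (pow_le_pow_iff_left₀ dist_nonneg (by positivity) two_ne_zero).1 ?_
  rw [h y hy z hz, mul_pow, sq (C : ℝ)]
  exact mul_le_mul_of_nonneg_right hgg (by positivity)

theorem antilipschitzWith_domRestrict {c : ℝ≥0} (h : ScalesDistOn f g s) (hc0 : c ≠ 0)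
    (hc : ∀ y ∈ s, c ≤ g y) : AntilipschitzWith c⁻¹ (s.domRestrict f) := by
  refine AntilipschitzWith.of_le_mul_dist fun y z => ?_
  rw [NNReal.coe_inv, inv_mul_eq_div, le_div_iff₀' (by positivity)]
  have hgg : (c * c : ℝ) ≤ g y * g z :=
    mul_le_mul (hc y y.2) (hc z z.2) (by positivity) (by positivity)
  refine (pow_le_pow_iff_left₀ (by positivity) dist_nonneg two_ne_zero).1 ?_
  rw [Subtype.dist_eq, domRestrict_apply, domRestrict_apply, h y y.2 z z.2, mul_pow, sq (c : ℝ)]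
  exact mul_le_mul_of_nonneg_right hgg (by positivity)

variable [MeasurableSpace X] [BorelSpace X] [MeasurableSpace Y] [BorelSpace Y] {d : ℝ}

theorem hausdorffMeasure_le_rpow_mul_image {c : ℝ≥0} (h : ScalesDistOn f g s) (hc0 : c ≠ 0)
    (hc : ∀ y ∈ s, c ≤ g y) (hd : 0 ≤ d) : μH[d] s ≤ (c⁻¹ : ℝ≥0) ^ d * μH[d] (f '' s) := by
  have := (h.antilipschitzWith_domRestrict hc0 hc).le_hausdorffMeasure_image hd univ
  rwa [image_univ, range_domRestrict, ← isometry_subtype_coe.hausdorffMeasure_image (Or.inl hd),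
    image_univ, Subtype.range_coe] at this

theorem hausdorffMeasure_image_le_and_lintegral_le {c q : ℝ≥0}
    (h : ScalesDistOn f g s) (hs : MeasurableSet s) (hc0 : c ≠ 0)
    (hg : ∀ y ∈ s, c ≤ g y ∧ g y ≤ c * q) (hd : 0 ≤ d) :
    μH[d] (f '' s) ≤ (q : ℝ≥0∞) ^ d * ∫⁻ y in s, (g y : ℝ≥0∞) ^ d ∂μH[d] ∧
      ∫⁻ y in s, (g y : ℝ≥0∞) ^ d ∂μH[d] ≤ (q : ℝ≥0∞) ^ d * μH[d] (f '' s) := by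
  have hlower : (c : ℝ≥0∞) ^ d * μH[d] s ≤ ∫⁻ y in s, (g y : ℝ≥0∞) ^ d ∂μH[d] := by
    rw [← setLIntegral_const]
    exact setLIntegral_mono' hs fun y hy =>
      ENNReal.rpow_le_rpow (ENNReal.coe_le_coe.2 (hg y hy).1) hd
  have hupper : ∫⁻ y in s, (g y : ℝ≥0∞) ^ d ∂μH[d] ≤ ((c * q : ℝ≥0) : ℝ≥0∞) ^ d * μH[d] s := by
    rw [← setLIntegral_const]
    exact setLIntegral_mono' hs fun y hy =>
      ENNReal.rpow_le_rpow (ENNReal.coe_le_coe.2 (hg y hy).2) hd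
  constructor
  · calc μH[d] (f '' s) ≤ ((c * q : ℝ≥0) : ℝ≥0∞) ^ d * μH[d] s :=
          (h.lipschitzOnWith fun y hy => (hg y hy).2).hausdorffMeasure_image_le hd
      _ = (q : ℝ≥0∞) ^ d * ((c : ℝ≥0∞) ^ d * μH[d] s) := by
          rw [ENNReal.coe_mul, ENNReal.mul_rpow_of_nonneg _ _ hd]; ring
      _ ≤ _ := by gcongr
  · calc ∫⁻ y in s, (g y : ℝ≥0∞) ^ d ∂μH[d] ≤ ((c * q : ℝ≥0) : ℝ≥0∞) ^ d * μH[d] s := hupper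
      _ ≤ ((c * q : ℝ≥0) : ℝ≥0∞) ^ d * (((c⁻¹ : ℝ≥0) : ℝ≥0∞) ^ d * μH[d] (f '' s)) := by
          gcongr
          exact h.hausdorffMeasure_le_rpow_mul_image hc0 (fun y hy => (hg y hy).1) hd
      _ = (q : ℝ≥0∞) ^ d * μH[d] (f '' s) := by
          rw [← mul_assoc, ← ENNReal.mul_rpow_of_nonneg _ _ hd, ← ENNReal.coe_mul,
            mul_right_comm, mul_inv_cancel₀ hc0, one_mul]

theorem hausdorffMeasure_image (h : ScalesDistOn f g t) (hf : MeasurableEmbedding f)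
    (hg : Measurable g) (hg0 : ∀ y ∈ t, g y ≠ 0) (ht : MeasurableSet t) (hd : 0 ≤ d) :
    μH[d] (f '' t) = ∫⁻ y in t, (g y : ℝ≥0∞) ^ d ∂μH[d] := by
  suffices hq : ∀ q : ℝ≥0, 1 < q →
      μH[d] (f '' t) ≤ (q : ℝ≥0∞) ^ d * ∫⁻ y in t, (g y : ℝ≥0∞) ^ d ∂μH[d] ∧
        ∫⁻ y in t, (g y : ℝ≥0∞) ^ d ∂μH[d] ≤ (q : ℝ≥0∞) ^ d * μH[d] (f '' t) from
    le_antisymm (ENNReal.le_of_forall_one_lt_le_rpow_mul fun q hq' => (hq q hq').1)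
      (ENNReal.le_of_forall_one_lt_le_rpow_mul fun q hq' => (hq q hq').2)
  intro q hq
  set A : ℤ → Set X := fun n => t ∩ g ⁻¹' Ico (q ^ n) (q ^ (n + 1))
  have hA : ∀ n, MeasurableSet (A n) := fun n => ht.inter (hg measurableSet_Ico)
  have hdisj : Pairwise (Disjoint on A) := fun m n hmn => disjoint_left.2 fun y hm hn => hmn <| by
    have := (zpow_lt_zpow_iff_right₀ hq).1 (hm.2.1.trans_lt hn.2.2)
    have := (zpow_lt_zpow_iff_right₀ hq).1 (hn.2.1.trans_lt hm.2.2)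
    omega
  have hcover : ⋃ n, A n = t := by
    refine (iUnion_subset fun n => inter_subset_left).antisymm fun y hy => ?_
    obtain ⟨n, hn⟩ := exists_mem_Ico_zpow (pos_iff_ne_zero.2 (hg0 y hy)) hq
    exact mem_iUnion.2 ⟨n, hy, hn⟩
  have himage : μH[d] (f '' t) = ∑' n, μH[d] (f '' A n) := by
    conv_lhs => rw [← hcover, image_iUnion]
    exact measure_iUnion (fun m n hmn => (disjoint_image_iff hf.injective).2 (hdisj hmn))
      fun n => hf.measurableSet_image.2 (hA n)
  have hint : ∫⁻ y in t, (g y : ℝ≥0∞) ^ d ∂μH[d] = ∑' n, ∫⁻ y in A n, (g y : ℝ≥0∞) ^ d ∂μH[d] := by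
    conv_lhs => rw [← hcover]
    exact lintegral_iUnion hA hdisj _
  have hq0 : q ≠ 0 := (zero_lt_one.trans hq).ne'
  have hpiece (n : ℤ) := (h.mono inter_subset_left).hausdorffMeasure_image_le_and_lintegral_le
    (hA n) (zpow_ne_zero n hq0) (fun y hy => ⟨hy.2.1, zpow_add_one₀ hq0 n ▸ hy.2.2.le⟩) hd
  rw [himage, hint, ← ENNReal.tsum_mul_left, ← ENNReal.tsum_mul_left]
  exact ⟨ENNReal.tsum_le_tsum fun n => (hpiece n).1, ENNReal.tsum_le_tsum fun n => (hpiece n).2⟩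

end ScalesDistOn

end ScalesDist

theorem div_sq_pow_mul_div_cpow_neg {a r : ℝ} (ha : 0 < a) (hr : 0 < r) {k : ℕ} {α β : ℂ}
    (hab : α + β = 2 * k) :
    (((a / r ^ 2) ^ k : ℝ) : ℂ) * ((a / r : ℝ) : ℂ) ^ (-α) =
      (a : ℂ) ^ ((β - α) / 2) * (r : ℂ) ^ (-β) := by
  have hexp (b : ℝ) (hb : 0 < b) (w : ℂ) : (b : ℂ) ^ w = Complex.exp (Real.log b * w) := by
    rw [Complex.cpow_def_of_ne_zero (by exact_mod_cast hb.ne'), Complex.ofReal_log hb.le]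
  rw [Complex.ofReal_pow, ← Complex.cpow_natCast, hexp _ (by positivity), hexp _ (by positivity),
    hexp _ ha, hexp _ hr, ← Complex.exp_add, ← Complex.exp_add, Real.log_div ha.ne' (by positivity),
    Real.log_div ha.ne' hr.ne', Real.log_pow]
  congr 1
  push_cast
  linear_combination (Real.log r - Real.log a / 2 : ℂ) * hab

theorem norm_sq_sub_sq_ne_zero {E : Type*} [SeminormedAddCommGroup E] {c : E} {R : ℝ}
    (hR : 0 ≤ R) (hc : ‖c‖ ≠ R) : ‖c‖ ^ 2 - R ^ 2 ≠ 0 :=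
  sub_ne_zero.2 fun h => hc ((sq_eq_sq₀ (norm_nonneg c) hR).1 h)

theorem sphere_subset_compl_singleton {E : Type*} [SeminormedAddCommGroup E] {c : E} {R : ℝ}
    (hc : ‖c‖ ≠ R) : sphere (0 : E) R ⊆ {c}ᶜ :=
  fun y hy (hyc : y = c) => hc (hyc ▸ mem_sphere_zero_iff_norm.1 hy)

section SignedInversion

variable {F : Type*} [NormedAddCommGroup F] [InnerProductSpace ℝ F]

/-- Inversion of power `p` about `c`, followed by the point reflection at `c` when `p < 0`.
It fixes `c`, since `p / 0 = 0`. -/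
noncomputable def signedInversion (c : F) (p : ℝ) (y : F) : F := c + (p / ‖y - c‖ ^ 2) • (y - c)

variable {c y z : F} {p R : ℝ}

theorem signedInversion_sub_center (c : F) (p : ℝ) (y : F) :
    signedInversion c p y - c = (p / ‖y - c‖ ^ 2) • (y - c) :=
  add_sub_cancel_left _ _

@[simp]
theorem signedInversion_self (c : F) (p : ℝ) : signedInversion c p c = c := by
  simp [signedInversion]

theorem norm_signedInversion_sub_center (c : F) (p : ℝ) (y : F) :
    ‖signedInversion c p y - c‖ = |p| / ‖y - c‖ := by
  rw [signedInversion_sub_center, norm_smul, Real.norm_eq_abs, abs_div, abs_pow, abs_norm]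
  rcases eq_or_ne ‖y - c‖ 0 with h | h
  · simp [h]
  · field_simp

theorem signedInversion_involutive (hp : p ≠ 0) : Involutive (signedInversion c p) := by
  intro y
  rcases eq_or_ne y c with rfl | hy
  · simp
  have hyc : ‖y - c‖ ≠ 0 := norm_ne_zero_iff.2 (sub_ne_zero.2 hy)
  rw [← sub_left_inj (a := c), signedInversion_sub_center, norm_signedInversion_sub_center,
    signedInversion_sub_center, smul_smul]
  convert one_smul ℝ (y - c)
  rw [div_pow, sq_abs]
  field_simp

theorem dist_signedInversion (hy : y ≠ c) (hz : z ≠ c) :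
    dist (signedInversion c p y) (signedInversion c p z) =
      |p| / (‖y - c‖ * ‖z - c‖) * dist y z := by
  calc dist (signedInversion c p y) (signedInversion c p z)
      = ‖p • ((1 / ‖y - c‖) ^ 2 • (y - c) - (1 / ‖z - c‖) ^ 2 • (z - c))‖ := by
        rw [dist_eq_norm]; congr 1; simp only [signedInversion]; module
    _ = |p| * dist ((1 / ‖y - c‖) ^ 2 • (y - c)) ((1 / ‖z - c‖) ^ 2 • (z - c)) := by
        rw [norm_smul, Real.norm_eq_abs, dist_eq_norm]
    _ = |p| / (‖y - c‖ * ‖z - c‖) * dist y z := by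
        rw [dist_div_norm_sq_smul (sub_ne_zero.2 hy) (sub_ne_zero.2 hz), dist_sub_right]; ring

theorem scalesDistOn_signedInversion (c : F) (p : ℝ) :
    ScalesDistOn (signedInversion c p) (fun y => ‖p‖₊ / ‖y - c‖₊ ^ 2) {c}ᶜ := by
  intro y hy z hz
  have hyc : ‖y - c‖ ≠ 0 := norm_ne_zero_iff.2 (sub_ne_zero.2 hy)
  have hzc : ‖z - c‖ ≠ 0 := norm_ne_zero_iff.2 (sub_ne_zero.2 hz)
  rw [dist_signedInversion hy hz]
  push_cast
  rw [Real.norm_eq_abs]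
  field_simp

theorem nnrpow_smul_cpow_norm_sub_signedInversion (hp : p ≠ 0) (hy : y ≠ c) {k : ℕ} {α β : ℂ}
    (hab : α + β = 2 * k) :
    (‖p‖₊ / ‖y - c‖₊ ^ 2) ^ (k : ℝ) • ((‖c - signedInversion c p y‖ : ℝ) : ℂ) ^ (-α) =
      ((|p| : ℝ) : ℂ) ^ ((β - α) / 2) * ((‖c - y‖ : ℝ) : ℂ) ^ (-β) := by
  rw [NNReal.smul_def, Complex.real_smul, norm_sub_rev, norm_signedInversion_sub_center,
    NNReal.coe_rpow, NNReal.coe_div, NNReal.coe_pow, coe_nnnorm, coe_nnnorm, Real.norm_eq_abs,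
    Real.rpow_natCast, div_sq_pow_mul_div_cpow_neg (abs_pos.2 hp)
      (norm_pos_iff.2 (sub_ne_zero.2 hy)) hab, norm_sub_rev]

theorem norm_signedInversion_of_norm_eq (hR : 0 ≤ R) (hy : ‖y‖ = R) :
    ‖signedInversion c (‖c‖ ^ 2 - R ^ 2) y‖ = R := by
  rcases eq_or_ne y c with rfl | hyc
  · simpa using hy
  have hq : ‖y - c‖ ^ 2 ≠ 0 := pow_ne_zero _ (norm_ne_zero_iff.2 (sub_ne_zero.2 hyc))
  have hq' : ‖y - c‖ ^ 2 = R ^ 2 - 2 * inner ℝ y c + ‖c‖ ^ 2 := by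
    rw [norm_sub_sq_real, hy]
  refine (sq_eq_sq₀ (norm_nonneg _) hR).1 ?_
  rw [signedInversion, norm_add_sq_real, norm_smul, real_inner_smul_right, inner_sub_right,
    real_inner_self_eq_norm_sq, real_inner_comm y c, Real.norm_eq_abs, mul_pow, sq_abs]
  rw [hq'] at hq ⊢
  field_simp
  ring

theorem preimage_signedInversion_sphere (hR : 0 ≤ R) (hc : ‖c‖ ≠ R) :
    signedInversion c (‖c‖ ^ 2 - R ^ 2) ⁻¹' sphere 0 R = sphere 0 R := by
  have hp := norm_sq_sub_sq_ne_zero hR hc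
  refine Subset.antisymm (fun y hy => ?_) fun y hy => ?_
  · rw [← signedInversion_involutive hp y, mem_sphere_zero_iff_norm]
    exact norm_signedInversion_of_norm_eq hR (mem_sphere_zero_iff_norm.1 hy)
  · exact mem_sphere_zero_iff_norm.2
      (norm_signedInversion_of_norm_eq hR (mem_sphere_zero_iff_norm.1 hy))

variable [MeasurableSpace F] [BorelSpace F]

theorem measurable_signedInversion (c : F) (p : ℝ) : Measurable (signedInversion c p) := by
  unfold signedInversion; fun_prop

theorem measurableEmbedding_signedInversion (hp : p ≠ 0) :
    MeasurableEmbedding (signedInversion c p) :=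
  .of_measurable_inverse (measurable_signedInversion c p)
    (by rw [(signedInversion_involutive hp).surjective.range_eq]; exact .univ)
    (measurable_signedInversion c p)
    (signedInversion_involutive hp).leftInverse

theorem map_signedInversion_restrict_sphere (hR : 0 ≤ R) (hc : ‖c‖ ≠ R) {d : ℝ} (hd : 0 ≤ d) :
    (μH[d].restrict (sphere (0 : F) R)).map (signedInversion c (‖c‖ ^ 2 - R ^ 2)) =
      (μH[d].restrict (sphere (0 : F) R)).withDensity
        fun y => ((‖‖c‖ ^ 2 - R ^ 2‖₊ / ‖y - c‖₊ ^ 2 : ℝ≥0) : ℝ≥0∞) ^ d := by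
  have hp := norm_sq_sub_sq_ne_zero hR hc
  have hJ := measurableEmbedding_signedInversion (c := c) hp
  have hinv := signedInversion_involutive (c := c) hp
  have hS := sphere_subset_compl_singleton (E := F) hc
  ext s hs
  have himage : signedInversion c (‖c‖ ^ 2 - R ^ 2) ⁻¹' s ∩ sphere 0 R =
      signedInversion c (‖c‖ ^ 2 - R ^ 2) '' (s ∩ sphere 0 R) := by
    rw [image_eq_preimage_of_inverse hinv.leftInverse hinv.rightInverse, preimage_inter,
      preimage_signedInversion_sphere hR hc]
  rw [hJ.map_apply, Measure.restrict_apply' isClosed_sphere.measurableSet, withDensity_apply _ hs,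
    Measure.restrict_restrict hs, himage]
  refine ((scalesDistOn_signedInversion c _).mono
    (inter_subset_right.trans hS)).hausdorffMeasure_image hJ (by fun_prop) (fun y hy => ?_)
    (hs.inter isClosed_sphere.measurableSet) hd
  exact div_ne_zero (nnnorm_ne_zero_iff.2 hp)
    (pow_ne_zero _ (nnnorm_ne_zero_iff.2 (sub_ne_zero.2 (hS hy.2))))

end SignedInversion

theorem newtonian_poisson_relation_general
    (k : ℕ) (R : ℝ) (hR : 0 < R)
    (x : EuclideanSpace ℝ (Fin (k + 1))) (hx : ‖x‖ ≠ R)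
    (α β : ℂ) (hab : α + β = 2 * (k : ℂ)) :
    ∫ y in Metric.sphere (0 : EuclideanSpace ℝ (Fin (k + 1))) R,
        ((‖x - y‖ : ℝ) : ℂ) ^ (-α) ∂μH[k]
      = ((|R ^ 2 - ‖x‖ ^ 2| : ℝ) : ℂ) ^ ((β - α) / 2)
        * ∫ y in Metric.sphere (0 : EuclideanSpace ℝ (Fin (k + 1))) R,
            ((‖x - y‖ : ℝ) : ℂ) ^ (-β) ∂μH[k] := by
  set J := signedInversion x (‖x‖ ^ 2 - R ^ 2)
  have hp := norm_sq_sub_sq_ne_zero hR.le hx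
  have hJinv : Involutive J := signedInversion_involutive hp
  have hJemb : MeasurableEmbedding J := measurableEmbedding_signedInversion hp
  have hJmap : (μH[k].restrict (sphere 0 R)).map J = (μH[k].restrict (sphere 0 R)).withDensity
      fun y => ((‖‖x‖ ^ 2 - R ^ 2‖₊ / ‖y - x‖₊ ^ 2) ^ (k : ℝ) : ℝ≥0) := by
    simp_rw [ENNReal.coe_rpow_of_nonneg _ k.cast_nonneg]
    exact map_signedInversion_restrict_sphere hR.le hx k.cast_nonneg
  calc ∫ y in sphere 0 R, ((‖x - y‖ : ℝ) : ℂ) ^ (-α) ∂μH[k]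
      = ∫ y, ((‖x - J y‖ : ℝ) : ℂ) ^ (-α) ∂(μH[k].restrict (sphere 0 R)).map J := by
        rw [hJemb.integral_map]
        simp only [hJinv _]
    _ = ∫ y in sphere 0 R, (‖‖x‖ ^ 2 - R ^ 2‖₊ / ‖y - x‖₊ ^ 2) ^ (k : ℝ) •
          ((‖x - J y‖ : ℝ) : ℂ) ^ (-α) ∂μH[k] := by
        rw [hJmap]
        exact integral_withDensity_eq_integral_smul (by fun_prop) _
    _ = ∫ y in sphere 0 R, ((|R ^ 2 - ‖x‖ ^ 2| : ℝ) : ℂ) ^ ((β - α) / 2) *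
          ((‖x - y‖ : ℝ) : ℂ) ^ (-β) ∂μH[k] := by
        refine setIntegral_congr_fun isClosed_sphere.measurableSet fun y hy => ?_
        rw [nnrpow_smul_cpow_norm_sub_signedInversion hp (sphere_subset_compl_singleton hx hy) hab,
          abs_sub_comm]
    _ = _ := integral_const_mul _ _

/-- If `α + β = 2k`, then `∫_{S^k(R)} ‖x−y‖^{−α} = |R² − ‖x‖²|^{(β−α)/2} ∫_{S^k(R)} ‖x−y‖^{−β}`
(complex powers). -/
theorem newtonian_poisson_relation
    (k : ℕ) (hk : 1 ≤ k) (R : ℝ) (hR : 0 < R)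
    (x : EuclideanSpace ℝ (Fin (k + 1))) (hx : ‖x‖ ≠ R)
    (α β : ℂ) (hab : α + β = 2 * (k : ℂ)) :
    ∫ y in Metric.sphere (0 : EuclideanSpace ℝ (Fin (k + 1))) R,
        ((‖x - y‖ : ℝ) : ℂ) ^ (-α) ∂μH[k]
      = ((|R ^ 2 - ‖x‖ ^ 2| : ℝ) : ℂ) ^ ((β - α) / 2)
        * ∫ y in Metric.sphere (0 : EuclideanSpace ℝ (Fin (k + 1))) R,
            ((‖x - y‖ : ℝ) : ℂ) ^ (-β) ∂μH[k] :=
  newtonian_poisson_relation_general k R hR x hx α β hab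
end

section
/- Let p ∈ ℂ and let a, b ∈ ℝ with a > b > 0. Then ∫_{θ ∈ [0, 2π]} ((a − b·sin θ : ℝ) : ℂ)^{−p} dθ = ((a² − b² : ℝ) : ℂ)^{1/2 − p} · ∫_{θ ∈ [0, 2π]} ((a − b·sin θ : ℝ) : ℂ)^{p − 1} dθ, where powers are complex powers (Complex.cpow) of positive real bases (note a − b·sin θ ≥ a − b > 0). -/
/-!
Write `L θ = a - b * sin θ` and `c = √(a ^ 2 - b ^ 2)`. Up to a constant factor, `L θ` is the
squared distance from `exp (i θ)` to the point `i r` inside the unit disc, `r = b / (a + c)`.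
Exchanging the two ends of each chord through `i r` gives a diffeomorphism `φ` of `ℝ` with
`φ (θ + 2π) = φ θ + 2π`, and by the power of the point `i r`, `L (φ θ) * L θ = c ^ 2`; moreover
`φ' θ = c / L θ`. Substituting `φ` in `∫ L ^ (p - 1)` over a period therefore turns the integrand
into `(c / L) * (c ^ 2 / L) ^ (p - 1) = (c ^ 2) ^ (p - 1 / 2) * L ^ (-p)`.
-/

open MeasureTheory Real

theorem Function.Periodic.intervalIntegral_deriv_smul_comp {E : Type*} [NormedAddCommGroup E]
    [NormedSpace ℝ E] {g : ℝ → E} {T : ℝ} (hg : Function.Periodic g T) (hgc : Continuous g)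
    {f f' : ℝ → ℝ} {t : ℝ} (hf : ∀ x ∈ Set.uIcc t (t + T), HasDerivAt f (f' x) x)
    (hf' : ContinuousOn f' (Set.uIcc t (t + T))) (hft : f (t + T) = f t + T) :
    ∫ x in t..t + T, f' x • g (f x) = ∫ x in t..t + T, g x := by
  rw [hg.intervalIntegral_add_eq t (f t), ← hft]
  exact intervalIntegral.integral_deriv_smul_comp hf hf' hgc

lemma Real.sin_two_mul_arctan (u : ℝ) : sin (2 * arctan u) = 2 * u / (1 + u ^ 2) := by
  have h : √(1 + u ^ 2) ^ 2 = 1 + u ^ 2 := sq_sqrt (by positivity)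
  rw [sin_two_mul, sin_arctan, cos_arctan]
  field_simp
  rw [h]

lemma Real.cos_two_mul_arctan (u : ℝ) : cos (2 * arctan u) = (1 - u ^ 2) / (1 + u ^ 2) := by
  rw [cos_two_mul, cos_sq_arctan]
  field_simp
  ring

/-- `exp (i * chordSwap r θ)` is the second endpoint of the chord of the unit circle through
`exp (i * θ)` and `i * r`. Since `1 + r ^ 2 - 2 * r * sin θ = ‖exp (i * θ) - i * r‖ ^ 2`, the
power of the point `i * r` gives `one_add_sq_sub_two_mul_sin_chordSwap`. -/
noncomputable def chordSwap (r θ : ℝ) : ℝ :=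
  θ + π - 2 * arctan (r * cos θ / (1 - r * sin θ))

section chordSwap

variable {r : ℝ}

lemma one_sub_mul_sin_pos (hr : |r| < 1) (θ : ℝ) : 0 < 1 - r * sin θ := by
  have := (le_abs_self _).trans (abs_mul r (sin θ)).le
  nlinarith [abs_nonneg r, abs_sin_le_one θ]

lemma one_add_sq_sub_two_mul_sin_pos (hr : |r| < 1) (θ : ℝ) :
    0 < 1 + r ^ 2 - 2 * r * sin θ := by
  have := (le_abs_self _).trans (abs_mul r (sin θ)).le
  nlinarith [abs_nonneg r, abs_sin_le_one θ, sq_abs r]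

lemma one_add_sq_mul_cos_div_one_sub_mul_sin (hr : |r| < 1) (θ : ℝ) :
    1 + (r * cos θ / (1 - r * sin θ)) ^ 2
      = (1 + r ^ 2 - 2 * r * sin θ) / (1 - r * sin θ) ^ 2 := by
  have := (one_sub_mul_sin_pos hr θ).ne'
  field_simp
  linear_combination r ^ 2 * sin_sq_add_cos_sq θ

lemma sin_chordSwap (hr : |r| < 1) (θ : ℝ) :
    sin (chordSwap r θ) = (2 * r - (1 + r ^ 2) * sin θ) / (1 + r ^ 2 - 2 * r * sin θ) := by
  have hd := (one_sub_mul_sin_pos hr θ).ne'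
  have hQ := (one_add_sq_sub_two_mul_sin_pos hr θ).ne'
  set u := r * cos θ / (1 - r * sin θ) with hu_def
  have hu := one_add_sq_mul_cos_div_one_sub_mul_sin hr θ
  rw [← hu_def] at hu
  have hsin : 2 * u / (1 + u ^ 2)
      = 2 * r * cos θ * (1 - r * sin θ) / (1 + r ^ 2 - 2 * r * sin θ) := by
    rw [hu, hu_def]; field_simp
  have hcos : (1 - u ^ 2) / (1 + u ^ 2)
      = ((1 - r * sin θ) ^ 2 - r ^ 2 * cos θ ^ 2) / (1 + r ^ 2 - 2 * r * sin θ) := by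
    rw [hu, hu_def]; field_simp
  rw [chordSwap, sub_eq_add_neg, add_right_comm, sin_add_pi, sin_add, sin_neg, cos_neg,
    sin_two_mul_arctan, cos_two_mul_arctan, hsin, hcos]
  generalize 1 + r ^ 2 - 2 * r * sin θ = Q at hQ ⊢
  field_simp
  linear_combination (2 * r - r ^ 2 * sin θ) * sin_sq_add_cos_sq θ

lemma hasDerivAt_chordSwap (hr : |r| < 1) (θ : ℝ) :
    HasDerivAt (chordSwap r) ((1 - r ^ 2) / (1 + r ^ 2 - 2 * r * sin θ)) θ := by
  have hd := (one_sub_mul_sin_pos hr θ).ne'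
  have hQ := (one_add_sq_sub_two_mul_sin_pos hr θ).ne'
  have hquot : HasDerivAt (fun t => r * cos t / (1 - r * sin t))
      ((r ^ 2 - r * sin θ) / (1 - r * sin θ) ^ 2) θ := by
    refine (((hasDerivAt_cos θ).const_mul r).div
      (((hasDerivAt_sin θ).const_mul r).const_sub 1) hd).congr_deriv ?_
    field_simp
    linear_combination r ^ 2 * sin_sq_add_cos_sq θ
  refine (((hasDerivAt_id θ).add_const π).sub (hquot.arctan.const_mul 2)).congr_deriv ?_
  rw [one_add_sq_mul_cos_div_one_sub_mul_sin hr θ]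
  field_simp
  ring

lemma chordSwap_add_two_pi (r θ : ℝ) : chordSwap r (θ + 2 * π) = chordSwap r θ + 2 * π := by
  simp only [chordSwap, sin_add_two_pi, cos_add_two_pi]
  ring

lemma one_add_sq_sub_two_mul_sin_chordSwap (hr : |r| < 1) (θ : ℝ) :
    1 + r ^ 2 - 2 * r * sin (chordSwap r θ) = (1 - r ^ 2) ^ 2 / (1 + r ^ 2 - 2 * r * sin θ) := by
  have hQ := (one_add_sq_sub_two_mul_sin_pos hr θ).ne'
  rw [sin_chordSwap hr, eq_div_iff hQ, sub_mul, ← mul_div_assoc, div_mul_cancel₀ _ hQ]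
  ring

end chordSwap

section

variable {a b c : ℝ}

lemma abs_div_add_lt_one (ha : 0 < a) (hc : 0 < c) (hcab : c ^ 2 = a ^ 2 - b ^ 2) :
    |b / (a + c)| < 1 := by
  rw [abs_div, abs_of_pos (by positivity : 0 < a + c), div_lt_one (by positivity), abs_lt]
  constructor <;> nlinarith

lemma sub_mul_sin_eq_mul (hac : a + c ≠ 0) (hcab : c ^ 2 = a ^ 2 - b ^ 2) (θ : ℝ) :
    a - b * sin θ = (a + c) / 2 * (1 + (b / (a + c)) ^ 2 - 2 * (b / (a + c)) * sin θ) := by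
  field_simp
  linear_combination (-1 : ℝ) * hcab

lemma add_div_two_mul_one_sub_sq (hac : a + c ≠ 0) (hcab : c ^ 2 = a ^ 2 - b ^ 2) :
    (a + c) / 2 * (1 - (b / (a + c)) ^ 2) = c := by
  field_simp
  linear_combination (-1 : ℝ) * hcab

lemma sub_mul_sin_chordSwap (ha : 0 < a) (hc : 0 < c) (hcab : c ^ 2 = a ^ 2 - b ^ 2) (θ : ℝ) :
    a - b * sin (chordSwap (b / (a + c)) θ) = c ^ 2 / (a - b * sin θ) := by
  have hac : a + c ≠ 0 := by positivity
  have hr := abs_div_add_lt_one ha hc hcab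
  have hQ := (one_add_sq_sub_two_mul_sin_pos hr θ).ne'
  have hk : (a + c) / 2 ≠ 0 := by positivity
  have hkc := add_div_two_mul_one_sub_sq hac hcab
  rw [sub_mul_sin_eq_mul hac hcab, sub_mul_sin_eq_mul hac hcab θ,
    one_add_sq_sub_two_mul_sin_chordSwap hr]
  generalize (a + c) / 2 = k at hk hkc ⊢
  generalize b / (a + c) = r at hQ hkc ⊢
  subst hkc
  field_simp

lemma hasDerivAt_chordSwap_div_add (ha : 0 < a) (hc : 0 < c) (hcab : c ^ 2 = a ^ 2 - b ^ 2)
    (θ : ℝ) : HasDerivAt (chordSwap (b / (a + c))) (c / (a - b * sin θ)) θ := by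
  have hac : a + c ≠ 0 := by positivity
  have hr := abs_div_add_lt_one ha hc hcab
  have hQ := (one_add_sq_sub_two_mul_sin_pos hr θ).ne'
  refine (hasDerivAt_chordSwap hr θ).congr_deriv ?_
  have hk : (a + c) / 2 ≠ 0 := by positivity
  have hkc := add_div_two_mul_one_sub_sq hac hcab
  rw [sub_mul_sin_eq_mul hac hcab]
  generalize (a + c) / 2 = k at hk hkc ⊢
  generalize b / (a + c) = r at hQ hkc ⊢
  subst hkc
  field_simp

end

lemma Complex.ofReal_cpow_eq_exp_log {x : ℝ} (hx : 0 < x) (s : ℂ) :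
    (x : ℂ) ^ s = Complex.exp (Real.log x * s) := by
  rw [Complex.cpow_def_of_ne_zero (by exact_mod_cast hx.ne'), Complex.ofReal_log hx.le]

lemma Complex.ofReal_div_mul_cpow_sq_div {c y : ℝ} (hc : 0 < c) (hy : 0 < y) (s : ℂ) :
    ((c / y : ℝ) : ℂ) * ((c ^ 2 / y : ℝ) : ℂ) ^ (s - 1)
      = ((c ^ 2 : ℝ) : ℂ) ^ (s - 1 / 2) * (y : ℂ) ^ (-s) := by
  rw [← Complex.cpow_one ((c / y : ℝ) : ℂ)]
  simp only [Complex.ofReal_cpow_eq_exp_log (by positivity : 0 < c / y),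
    Complex.ofReal_cpow_eq_exp_log (by positivity : 0 < c ^ 2 / y),
    Complex.ofReal_cpow_eq_exp_log (by positivity : 0 < c ^ 2),
    Complex.ofReal_cpow_eq_exp_log hy, ← Complex.exp_add,
    Real.log_div (by positivity : c ≠ 0) hy.ne',
    Real.log_div (by positivity : c ^ 2 ≠ 0) hy.ne',
    Real.log_pow]
  push_cast
  ring_nf

theorem integral_sub_mul_sin_cpow_sub_one {a b : ℝ} (hab : |b| < a) (p : ℂ) :
    ∫ θ in (0 : ℝ)..2 * π, ((a - b * sin θ : ℝ) : ℂ) ^ (p - 1)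
      = ((a ^ 2 - b ^ 2 : ℝ) : ℂ) ^ (p - 1 / 2)
        * ∫ θ in (0 : ℝ)..2 * π, ((a - b * sin θ : ℝ) : ℂ) ^ (-p) := by
  have ha : 0 < a := (abs_nonneg b).trans_lt hab
  have hab2 : 0 < a ^ 2 - b ^ 2 := by nlinarith [sq_abs b, abs_nonneg b]
  set c := √(a ^ 2 - b ^ 2)
  have hc : 0 < c := sqrt_pos.2 hab2
  have hcab : c ^ 2 = a ^ 2 - b ^ 2 := sq_sqrt hab2.le
  have hL (θ : ℝ) : 0 < a - b * sin θ := by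
    nlinarith [abs_mul b (sin θ), le_abs_self (b * sin θ), abs_sin_le_one θ, abs_nonneg b]
  have hsubst := Function.Periodic.intervalIntegral_deriv_smul_comp
    (g := fun θ => ((a - b * sin θ : ℝ) : ℂ) ^ (p - 1)) (T := 2 * π) (t := 0)
    (fun θ => by simp only [sin_add_two_pi])
    ((by fun_prop : Continuous fun θ => ((a - b * sin θ : ℝ) : ℂ)).cpow continuous_const
      fun θ => Complex.ofReal_mem_slitPlane.2 (hL θ))
    (fun θ _ => hasDerivAt_chordSwap_div_add ha hc hcab θ)
    (continuous_const.div (by fun_prop) fun θ => (hL θ).ne').continuousOn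
    (by simpa using chordSwap_add_two_pi (b / (a + c)) 0)
  rw [zero_add] at hsubst
  rw [← hsubst, ← intervalIntegral.integral_const_mul]
  refine intervalIntegral.integral_congr fun θ _ => ?_
  rw [sub_mul_sin_chordSwap ha hc hcab, Complex.real_smul,
    Complex.ofReal_div_mul_cpow_sq_div hc (hL θ), hcab]

/-- For `p ∈ ℂ` and `a > b > 0`,
`∫₀^{2π} (a − b sin θ)^{−p} dθ = (a² − b²)^{1/2 − p} ∫₀^{2π} (a − b sin θ)^{p−1} dθ`. -/
theorem one_dimensional_poisson_identity
    (p : ℂ) (a b : ℝ) (hab : b < a) (hb : 0 < b) :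
    ∫ θ in Set.Icc (0 : ℝ) (2 * π),
        ((a - b * Real.sin θ : ℝ) : ℂ) ^ (-p)
      = ((a ^ 2 - b ^ 2 : ℝ) : ℂ) ^ ((1 : ℂ) / 2 - p)
        * ∫ θ in Set.Icc (0 : ℝ) (2 * π),
            ((a - b * Real.sin θ : ℝ) : ℂ) ^ (p - 1) := by
  have hX : ((a ^ 2 - b ^ 2 : ℝ) : ℂ) ≠ 0 := by
    rw [Complex.ofReal_ne_zero]; nlinarith
  simp only [integral_Icc_eq_integral_Ioc, ← intervalIntegral.integral_of_le two_pi_pos.le]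
  rw [integral_sub_mul_sin_cpow_sub_one ((abs_of_pos hb).trans_lt hab), ← mul_assoc,
    ← Complex.cpow_add _ _ hX, sub_add_sub_cancel', sub_self, Complex.cpow_zero, one_mul]
end

section
/- Let k ≥ 1 and for y ∈ E with y ≠ 0 define ω_y : E → ℝ by ω_y(x) = (‖y‖² − ‖x‖²)/‖x − y‖². Then: (i) if k = 1, for every y ≠ 0 the function ω_y is harmonic on the open ball {x : ‖x‖ < ‖y‖}; (ii) if k ≥ 2, then for a point x ∈ E one has Δ(ω_y^k)(x) = 0 for every y with ‖y‖ > ‖x‖ if and only if x = 0 (here Δ is the Laplacian in the variable x and ω_y^k is the k-th power). -/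
open MeasureTheory

/-- The Laplacian of `f : ℝ^n → ℝ` at `x`: the sum of the pure second directional
derivatives of `f` at `x` along the standard orthonormal basis vectors. -/
noncomputable def euclideanLaplacian {n : ℕ}
    (f : EuclideanSpace ℝ (Fin n) → ℝ) (x : EuclideanSpace ℝ (Fin n)) : ℝ :=
  ∑ i : Fin n, iteratedFDeriv ℝ 2 f x
    ![EuclideanSpace.single i (1 : ℝ), EuclideanSpace.single i (1 : ℝ)]

/-!
Write `v = ‖x - y‖²`. The gradient of `ω_y` is `-(2 / v) • (x + ω_y(x) • (x - y))`, and the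
vector in brackets has norm `‖y‖`, so `‖∇ω_y‖² = 4‖y‖² / v²`. Taking the trace of the derivative
of this gradient gives `Δω_y = (4 - 2n)(1 + ω_y) / v` in `ℝⁿ`, which vanishes for `n = 2`.
The chain rule `Δ(φ ∘ ω) = φ'(ω) Δω + φ''(ω) ‖∇ω‖²` then gives, in dimension `k + 1`,
`Δ(ω_y^k) = 2k(k - 1) ω_y^(k-2) / v · (2‖y‖² / v - ω_y (1 + ω_y))`. The bracket is `2 - 2 = 0`
at `x = 0`, but `8 - 12 = -4` at `y = 2x`.
-/

open Filter Topology InnerProductSpace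
open LinearMap (trace)
open scoped RealInnerProductSpace

theorem HasDerivAt.comp_hasGradientAt {F : Type*} [NormedAddCommGroup F] [InnerProductSpace ℝ F]
    [CompleteSpace F] {φ : ℝ → ℝ} {φ' : ℝ} {g : F → ℝ} {G x : F}
    (hφ : HasDerivAt φ φ' (g x)) (hg : HasGradientAt g G x) :
    HasGradientAt (fun z => φ (g z)) (φ' • G) x := by
  rw [hasGradientAt_iff_hasFDerivAt] at hg ⊢
  refine (hφ.comp_hasFDerivAt x hg).congr_fderiv ?_
  ext
  simp

theorem hasDerivAt_natCast_mul_pow_pred (k : ℕ) (t : ℝ) :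
    HasDerivAt (fun t : ℝ => k * t ^ (k - 1)) (k * (k - 1) * t ^ (k - 2)) t := by
  rcases k with _ | k
  · simpa using hasDerivAt_const t (0 : ℝ)
  · simpa [mul_assoc] using (hasDerivAt_pow k t).const_mul ((k + 1 : ℕ) : ℝ)

theorem norm_lt_norm_two_smul {E : Type*} [NormedAddCommGroup E] [NormedSpace ℝ E] {x : E}
    (hx : x ≠ 0) : ‖x‖ < ‖(2 : ℝ) • x‖ := by
  rw [norm_smul, Real.norm_two]
  linarith [norm_pos_iff.mpr hx]

section Laplacian

variable {n : ℕ}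

theorem euclideanLaplacian_eq_trace {f : EuclideanSpace ℝ (Fin n) → ℝ}
    {G : EuclideanSpace ℝ (Fin n) → EuclideanSpace ℝ (Fin n)}
    {L : EuclideanSpace ℝ (Fin n) →L[ℝ] EuclideanSpace ℝ (Fin n)} {x : EuclideanSpace ℝ (Fin n)}
    (hf : ∀ᶠ z in 𝓝 x, HasGradientAt f (G z) z) (hG : HasFDerivAt G L x) :
    euclideanLaplacian f x = trace ℝ _ (L : EuclideanSpace ℝ (Fin n) →ₗ[ℝ] _) := by
  have hdf : fderiv ℝ f =ᶠ[𝓝 x] fun z => innerSL ℝ (G z) :=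
    hf.mono fun z hz => (hasGradientAt_iff_hasFDerivAt.mp hz).fderiv
  have hd2f : fderiv ℝ (fderiv ℝ f) x = (innerSL ℝ).comp L :=
    (((innerSL ℝ).hasFDerivAt.comp x hG).congr_of_eventuallyEq hdf).fderiv
  rw [LinearMap.trace_eq_sum_inner _ (EuclideanSpace.basisFun (Fin n) ℝ)]
  refine Finset.sum_congr rfl fun i _ => ?_
  rw [iteratedFDeriv_two_apply, hd2f]
  simp [real_inner_comm]

theorem euclideanLaplacian_comp {φ φ' : ℝ → ℝ} {φ'' : ℝ}
    {g : EuclideanSpace ℝ (Fin n) → ℝ} {G : EuclideanSpace ℝ (Fin n) → EuclideanSpace ℝ (Fin n)}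
    {x : EuclideanSpace ℝ (Fin n)} (hφ : ∀ t, HasDerivAt φ (φ' t) t)
    (hφ' : HasDerivAt φ' φ'' (g x)) (hg : ∀ᶠ z in 𝓝 x, HasGradientAt g (G z) z)
    (hG : DifferentiableAt ℝ G x) :
    euclideanLaplacian (fun z => φ (g z)) x =
      φ' (g x) * euclideanLaplacian g x + φ'' * ‖G x‖ ^ 2 := by
  have hgx := hasGradientAt_iff_hasFDerivAt.mp hg.self_of_nhds
  rw [euclideanLaplacian_eq_trace (hg.mono fun z hz => (hφ (g z)).comp_hasGradientAt hz)
      ((hφ'.comp_hasFDerivAt x hgx).smul hG.hasFDerivAt),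
    euclideanLaplacian_eq_trace hg hG.hasFDerivAt]
  simp [ContinuousLinearMap.coe_smulRight]

end Laplacian

section Omega

variable {F : Type*} [NormedAddCommGroup F] [InnerProductSpace ℝ F]

noncomputable def omega (y x : F) : ℝ := (‖y‖ ^ 2 - ‖x‖ ^ 2) / ‖x - y‖ ^ 2

noncomputable def omegaGradient (y x : F) : F :=
  -(2 / ‖x - y‖ ^ 2) • (x + omega y x • (x - y))

theorem two_mul_inner_self_sub (x y : F) :
    2 * ⟪x, x - y⟫ = ‖x‖ ^ 2 + ‖x - y‖ ^ 2 - ‖y‖ ^ 2 := by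
  rw [norm_sub_sq_real, inner_sub_right, real_inner_self_eq_norm_sq]
  ring

omit [InnerProductSpace ℝ F] in
theorem omega_zero_right {y : F} (hy : y ≠ 0) : omega y 0 = 1 := by
  simp [omega, hy]

theorem omega_two_smul_self {x : F} (hx : x ≠ 0) : omega ((2 : ℝ) • x) x = 3 := by
  have hx' : ‖x‖ ≠ 0 := norm_ne_zero_iff.mpr hx
  rw [omega, show x - (2 : ℝ) • x = -x by module, norm_neg, norm_smul, Real.norm_two]
  field_simp
  ring

theorem contDiffOn_omega {m : WithTop ℕ∞} (y : F) : ContDiffOn ℝ m (omega y) {y}ᶜ :=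
  (contDiffOn_const.sub (contDiff_norm_sq ℝ).contDiffOn).div
    ((contDiff_id.sub contDiff_const).norm_sq ℝ).contDiffOn
    fun _ hx => pow_ne_zero 2 (norm_ne_zero_iff.mpr (sub_ne_zero.mpr hx))

theorem hasFDerivAt_omega {y x : F} (hx : x ≠ y) :
    HasFDerivAt (omega y) (innerSL ℝ (omegaGradient y x)) x := by
  have hv : ‖x - y‖ ≠ 0 := norm_ne_zero_iff.mpr (sub_ne_zero.mpr hx)
  have h := ((hasFDerivAt_const (‖y‖ ^ 2) x).sub (hasFDerivAt_id x).norm_sq).mul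
    ((hasDerivAt_inv (pow_ne_zero 2 hv)).comp_hasFDerivAt x
      ((hasFDerivAt_id x).sub_const y).norm_sq)
  refine h.congr_fderiv ?_
  ext v
  simp only [omegaGradient, omega, id_eq, Pi.sub_apply, map_sub, map_add, map_neg, map_smul,
    ContinuousLinearMap.comp_id, neg_smul, smul_neg, smul_add, Function.comp_apply, zero_sub,
    add_apply, neg_apply, smul_apply, sub_apply, coe_innerSL_apply, nsmul_eq_mul, Nat.cast_ofNat,
    smul_eq_mul]
  field_simp
  ring

theorem hasGradientAt_omega [CompleteSpace F] {y x : F} (hx : x ≠ y) :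
    HasGradientAt (omega y) (omegaGradient y x) x :=
  hasGradientAt_iff_hasFDerivAt.mpr (hasFDerivAt_omega hx)

/-- `x + ω_y(x) • (x - y)` is the second point where the line through `y` and `x` meets the
sphere of radius `‖y‖`. -/
theorem norm_add_omega_smul_sub {y x : F} (hx : x ≠ y) :
    ‖x + omega y x • (x - y)‖ = ‖y‖ := by
  have hv : ‖x - y‖ ≠ 0 := norm_ne_zero_iff.mpr (sub_ne_zero.mpr hx)
  rw [← sq_eq_sq₀ (norm_nonneg _) (norm_nonneg _), norm_add_sq_real, norm_smul, inner_smul_right,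
    mul_pow, Real.norm_eq_abs, sq_abs, mul_left_comm, two_mul_inner_self_sub, omega]
  field_simp
  ring

theorem norm_omegaGradient {y x : F} (hx : x ≠ y) :
    ‖omegaGradient y x‖ = 2 * ‖y‖ / ‖x - y‖ ^ 2 := by
  rw [omegaGradient, norm_smul, norm_add_omega_smul_sub hx, norm_neg, norm_div, norm_pow,
    norm_norm, Real.norm_two]
  ring

theorem hasFDerivAt_omegaGradient {y x : F} (hx : x ≠ y) :
    HasFDerivAt (omegaGradient y)
      (-(2 / ‖x - y‖ ^ 2) • ((1 + omega y x) • ContinuousLinearMap.id ℝ F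
          + (innerSL ℝ (omegaGradient y x)).smulRight (x - y))
        + ((4 / ‖x - y‖ ^ 4) • innerSL ℝ (x - y)).smulRight (x + omega y x • (x - y))) x := by
  have hv : ‖x - y‖ ≠ 0 := norm_ne_zero_iff.mpr (sub_ne_zero.mpr hx)
  have hs := (((hasDerivAt_inv (pow_ne_zero 2 hv)).comp_hasFDerivAt x
    ((hasFDerivAt_id x).sub_const y).norm_sq).const_mul (-2 : ℝ)).congr_of_eventuallyEq
    (f₁ := fun z => -(2 / ‖z - y‖ ^ 2)) (.of_forall fun z => by simp [div_eq_mul_inv])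
  have hT := (hasFDerivAt_id x).add ((hasFDerivAt_omega hx).smul ((hasFDerivAt_id x).sub_const y))
  refine (hs.smul hT).congr_fderiv ?_
  ext v
  simp only [id_eq, smul_add, neg_smul, map_sub, ContinuousLinearMap.comp_id, smul_neg, neg_neg,
    Pi.add_apply, Pi.smul_apply', add_apply, neg_apply, smul_apply, ContinuousLinearMap.id_apply,
    ContinuousLinearMap.smulRight_apply, coe_innerSL_apply, sub_apply, nsmul_eq_mul,
    Nat.cast_ofNat, smul_eq_mul]
  module

end Omega

section LaplacianOmega

variable {n : ℕ} {y x : EuclideanSpace ℝ (Fin n)}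

theorem euclideanLaplacian_omega (hx : x ≠ y) :
    euclideanLaplacian (omega y) x = (4 - 2 * n) * (1 + omega y x) / ‖x - y‖ ^ 2 := by
  have hv : ‖x - y‖ ≠ 0 := norm_ne_zero_iff.mpr (sub_ne_zero.mpr hx)
  rw [euclideanLaplacian_eq_trace ((eventually_ne_nhds hx).mono fun z hz => hasGradientAt_omega hz)
    (hasFDerivAt_omegaGradient hx), omegaGradient]
  have hT : ⟪x + omega y x • (x - y), x - y⟫ = ‖x - y‖ ^ 2 * (1 + omega y x) / 2 := by
    rw [inner_add_left, real_inner_smul_left, real_inner_self_eq_norm_sq,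
      ← mul_div_cancel_left₀ ⟪x, x - y⟫ two_ne_zero, two_mul_inner_self_sub, omega]
    field_simp
    ring
  set D := x - y
  set T := x + omega y x • D
  simp only [smul_add, neg_smul, map_add, map_neg, map_smul, smul_eq_mul,
    ContinuousLinearMap.toLinearMap_add, ContinuousLinearMap.toLinearMap_neg,
    ContinuousLinearMap.toLinearMap_smul, ContinuousLinearMap.coe_id,
    ContinuousLinearMap.coe_smulRight, ContinuousLinearMap.toLinearMap_innerSL_apply,
    LinearMap.trace_id, finrank_euclideanSpace, Fintype.card_fin, LinearMap.trace_smulRight,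
    LinearMap.neg_apply, LinearMap.smul_apply, innerₛₗ_apply_apply, real_inner_comm T D, hT]
  field_simp
  ring

theorem euclideanLaplacian_omega_pow (k : ℕ) (hx : x ≠ y) :
    euclideanLaplacian (fun z => omega y z ^ k) x =
      k * omega y x ^ (k - 1) * ((4 - 2 * n) * (1 + omega y x) / ‖x - y‖ ^ 2) +
        k * (k - 1) * omega y x ^ (k - 2) * (4 * ‖y‖ ^ 2 / ‖x - y‖ ^ 4) := by
  rw [euclideanLaplacian_comp (fun t => hasDerivAt_pow k t) (hasDerivAt_natCast_mul_pow_pred k _)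
    ((eventually_ne_nhds hx).mono fun z hz => hasGradientAt_omega hz)
    (hasFDerivAt_omegaGradient hx).differentiableAt, euclideanLaplacian_omega hx,
    norm_omegaGradient hx]
  ring

theorem euclideanLaplacian_omega_pow_fin_succ (k : ℕ)
    {y x : EuclideanSpace ℝ (Fin (k + 1))} (hx : x ≠ y) :
    euclideanLaplacian (fun z => omega y z ^ k) x =
      2 * k * (k - 1) * omega y x ^ (k - 2) / ‖x - y‖ ^ 2 *
        (2 * ‖y‖ ^ 2 / ‖x - y‖ ^ 2 - omega y x * (1 + omega y x)) := by
  rw [euclideanLaplacian_omega_pow k hx]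
  rcases k with _ | _ | k
  · simp
  · norm_num
  · simp only [show k + 1 + 1 - 1 = k + 1 by omega, pow_succ]
    push_cast
    ring

theorem euclideanLaplacian_omega_pow_zero {k : ℕ} {y : EuclideanSpace ℝ (Fin (k + 1))}
    (hy : y ≠ 0) : euclideanLaplacian (fun z => omega y z ^ k) 0 = 0 := by
  have hy' : ‖y‖ ≠ 0 := norm_ne_zero_iff.mpr hy
  rw [euclideanLaplacian_omega_pow_fin_succ k hy.symm, omega_zero_right hy, zero_sub, norm_neg]
  field_simp
  ring

theorem euclideanLaplacian_omega_two_smul_pow_ne_zero {k : ℕ} (hk : 2 ≤ k)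
    {x : EuclideanSpace ℝ (Fin (k + 1))} (hx : x ≠ 0) :
    euclideanLaplacian (fun z => omega ((2 : ℝ) • x) z ^ k) x ≠ 0 := by
  have hx' : ‖x‖ ≠ 0 := norm_ne_zero_iff.mpr hx
  have hk' : (2 : ℝ) ≤ k := by exact_mod_cast hk
  have hpos : (0 : ℝ) < 2 * k * (k - 1) * 3 ^ (k - 2) :=
    mul_pos (mul_pos (by linarith) (by linarith)) (by positivity)
  have hbracket : 2 * (2 * ‖x‖) ^ 2 / ‖x‖ ^ 2 - 3 * (1 + 3) = -4 := by
    field_simp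
    ring
  rw [euclideanLaplacian_omega_pow_fin_succ k (ne_of_apply_ne norm (norm_lt_norm_two_smul hx).ne),
    omega_two_smul_self hx, show x - (2 : ℝ) • x = -x by module, norm_neg, norm_smul,
    Real.norm_two, hbracket]
  exact mul_ne_zero (div_ne_zero hpos.ne' (pow_ne_zero 2 hx')) (by norm_num)

end LaplacianOmega

theorem omega_power_harmonicity_general
    (k : ℕ) :
    (k = 1 → ∀ y : EuclideanSpace ℝ (Fin (k + 1)), y ≠ 0 →
      ContDiffOn ℝ 2
          (fun x : EuclideanSpace ℝ (Fin (k + 1)) => (‖y‖ ^ 2 - ‖x‖ ^ 2) / ‖x - y‖ ^ 2)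
          (Metric.ball (0 : EuclideanSpace ℝ (Fin (k + 1))) ‖y‖)
        ∧ ∀ x ∈ Metric.ball (0 : EuclideanSpace ℝ (Fin (k + 1))) ‖y‖,
            euclideanLaplacian
              (fun x : EuclideanSpace ℝ (Fin (k + 1)) =>
                (‖y‖ ^ 2 - ‖x‖ ^ 2) / ‖x - y‖ ^ 2) x = 0)
    ∧ (2 ≤ k → ∀ x : EuclideanSpace ℝ (Fin (k + 1)),
        ((∀ y : EuclideanSpace ℝ (Fin (k + 1)), ‖x‖ < ‖y‖ →
          euclideanLaplacian
            (fun x : EuclideanSpace ℝ (Fin (k + 1)) =>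
              ((‖y‖ ^ 2 - ‖x‖ ^ 2) / ‖x - y‖ ^ 2) ^ k) x = 0) ↔ x = 0)) := by
  refine ⟨?_, fun hk x => ⟨fun h => ?_, ?_⟩⟩
  · rintro rfl y -
    have hne (x) (hx : x ∈ Metric.ball (0 : EuclideanSpace ℝ (Fin 2)) ‖y‖) : x ≠ y :=
      ne_of_apply_ne norm (mem_ball_zero_iff.mp hx).ne
    refine ⟨(contDiffOn_omega y).mono hne, fun x hx => ?_⟩
    show euclideanLaplacian (omega y) x = 0
    rw [euclideanLaplacian_omega (hne x hx)]
    norm_num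
  · by_contra hx
    exact euclideanLaplacian_omega_two_smul_pow_ne_zero hk hx (h _ (norm_lt_norm_two_smul hx))
  · rintro rfl y hy
    exact euclideanLaplacian_omega_pow_zero (norm_pos_iff.mp ((norm_nonneg _).trans_lt hy))

/-- (i) For `k = 1`, `ω_y(x) = (‖y‖² − ‖x‖²)/‖x − y‖²` is harmonic in `x` on the ball
`‖x‖ < ‖y‖`; (ii) for `k ≥ 2`, `Δ(ω_y^k)(x) = 0` for every `y` with `‖y‖ > ‖x‖`
if and only if `x = 0`. -/
theorem omega_power_harmonicity
    (k : ℕ) (hk : 1 ≤ k) :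
    (k = 1 → ∀ y : EuclideanSpace ℝ (Fin (k + 1)), y ≠ 0 →
      ContDiffOn ℝ 2
          (fun x : EuclideanSpace ℝ (Fin (k + 1)) => (‖y‖ ^ 2 - ‖x‖ ^ 2) / ‖x - y‖ ^ 2)
          (Metric.ball (0 : EuclideanSpace ℝ (Fin (k + 1))) ‖y‖)
        ∧ ∀ x ∈ Metric.ball (0 : EuclideanSpace ℝ (Fin (k + 1))) ‖y‖,
            euclideanLaplacian
              (fun x : EuclideanSpace ℝ (Fin (k + 1)) =>
                (‖y‖ ^ 2 - ‖x‖ ^ 2) / ‖x - y‖ ^ 2) x = 0)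
    ∧ (2 ≤ k → ∀ x : EuclideanSpace ℝ (Fin (k + 1)),
        ((∀ y : EuclideanSpace ℝ (Fin (k + 1)), ‖x‖ < ‖y‖ →
          euclideanLaplacian
            (fun x : EuclideanSpace ℝ (Fin (k + 1)) =>
              ((‖y‖ ^ 2 - ‖x‖ ^ 2) / ‖x - y‖ ^ 2) ^ k) x = 0) ↔ x = 0)) :=
  omega_power_harmonicity_general k
end

section
/- (One Radius Theorem, real case.) Fix ρ > 0 and an integer k ≥ 1. Let μ, ν ∈ ℝ with μ ≠ ν, μ ≤ k²/(4ρ²) and ν ≤ k²/(4ρ²). Let φ_μ, φ_ν : ℝ → ℝ be normalized radial eigenfunctions on [0, ∞) with eigenvalues μ and ν respectively. Then φ_μ(r) ≠ φ_ν(r) for every r > 0. (Hence two such eigenfunctions agreeing at one positive radius are identical.) -/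
open Real Set Filter Topology Asymptotics MeasureTheory

/-!
With `s = sinh (r / ρ)` the radial equation reads `(sᵏ φ')' = -λ sᵏ φ`. Since `sᵏ = O(r)` at the
origin for `k ≥ 1`, the flux `sᵏ φ'` must tend to `0` there: a nonzero limit would force
`|φ'| ≳ 1 / r`, incompatible with continuity of `φ` at `0`. Hence the weighted Wronskian
`sᵏ (f' g - f g')` of two solutions vanishes at the origin, and for eigenvalues `μ < ν` its
derivative is `(ν - μ) sᵏ φ_μ φ_ν`. For `λ ≤ k² / 4ρ²` the function `exp (-k r / 2ρ)` is a strict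
supersolution, and the same Wronskian argument against it shows `φ_λ > 0`. So the Wronskian of
`φ_μ, φ_ν` is positive, `φ_μ / φ_ν` increases from `1`, and `φ_ν < φ_μ` on `(0, ∞)`.
-/

section Calculus

variable {f f' : ℝ → ℝ} {a b c : ℝ}

theorem lt_of_tendsto_nhdsGT_of_hasDerivAt_pos (hab : a < b) (hlim : Tendsto f (𝓝[>] a) (𝓝 c))
    (hf : ∀ x ∈ Ioc a b, HasDerivAt f (f' x) x) (hf' : ∀ x ∈ Ioo a b, 0 < f' x) : c < f b := by
  have hmono : StrictMonoOn f (Ioc a b) := by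
    refine strictMonoOn_of_deriv_pos (convex_Ioc a b)
      (fun x hx => (hf x hx).continuousAt.continuousWithinAt) fun x hx => ?_
    rw [interior_Ioc] at hx
    exact (hf x (Ioo_subset_Ioc_self hx)).deriv ▸ hf' x hx
  have hm : (a + b) / 2 ∈ Ioc a b := ⟨by linarith, by linarith⟩
  have hcm : c ≤ f ((a + b) / 2) := le_of_tendsto hlim <| by
    filter_upwards [Ioo_mem_nhdsGT hm.1] with x hx
    exact (hmono ⟨hx.1, hx.2.le.trans hm.2⟩ hm hx.2).le
  exact hcm.trans_lt (hmono hm ⟨hab, le_rfl⟩ (by linarith))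

theorem exists_tendsto_nhdsGT_of_hasDerivAt (hab : a < b)
    (hf : ∀ x ∈ Ioc a b, HasDerivAt f (f' x) x) (hf' : IntegrableOn f' (Icc a b)) :
    ∃ c, Tendsto f (𝓝[>] a) (𝓝 c) := by
  refine ⟨f b - ∫ t in a..b, f' t, ?_⟩
  have hprim : ContinuousWithinAt (fun x => ∫ t in x..b, f' t) (Icc a b) a := by
    rw [← uIcc_of_le hab.le] at hf' ⊢
    exact intervalIntegral.continuousOn_primitive_interval_left hf' a left_mem_uIcc
  have hlim : Tendsto (fun x => f b - ∫ t in x..b, f' t) (𝓝[>] a) (𝓝 (f b - ∫ t in a..b, f' t)) :=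
    tendsto_const_nhds.sub <| by
      rw [← nhdsWithin_Ioo_eq_nhdsGT hab]
      exact hprim.tendsto.mono_left (nhdsWithin_mono _ Ioo_subset_Icc_self)
  refine hlim.congr' ?_
  filter_upwards [Ioo_mem_nhdsGT hab] with x hx
  have hderiv : ∀ y ∈ uIcc x b, HasDerivAt f (f' y) y := fun y hy => by
    rw [uIcc_of_le hx.2.le] at hy
    exact hf y ⟨hx.1.trans_le hy.1, hy.2⟩
  have hint : IntervalIntegrable f' volume x b :=
    (intervalIntegrable_iff_integrableOn_Icc_of_le hx.2.le).mpr
      (hf'.mono_set (Icc_subset_Icc hx.1.le le_rfl))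
  rw [intervalIntegral.integral_eq_sub_of_hasDerivAt hderiv hint, sub_sub_cancel]

theorem not_tendsto_nhds_of_le_mul_abs_deriv {ε : ℝ} (hε : 0 < ε)
    (h : ∀ᶠ r in 𝓝[>] 0, ε ≤ r * |deriv f r|) (y : ℝ) : ¬Tendsto f (𝓝[>] 0) (𝓝 y) := by
  intro hf
  obtain ⟨δ, hδ, hsub⟩ := mem_nhdsGT_iff_exists_Ioo_subset.mp h
  -- the mean value theorem on `[r, 2r]` keeps `|f (2r) - f r|` away from zero
  have hgap : ∀ᶠ r in 𝓝[>] 0, ε / 2 ≤ |f (2 * r) - f r| := by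
    filter_upwards [Ioo_mem_nhdsGT (half_pos hδ)] with r ⟨hr, hrδ⟩
    have hbound : ∀ x ∈ Icc r (2 * r), ε ≤ x * |deriv f x| := fun x hx =>
      hsub ⟨hr.trans_le hx.1, by linarith [hx.2]⟩
    have hdiff : ∀ x ∈ Icc r (2 * r), DifferentiableAt ℝ f x := fun x hx =>
      differentiableAt_of_deriv_ne_zero fun h0 => by
        have := hbound x hx
        simp only [h0, abs_zero, mul_zero] at this
        linarith
    obtain ⟨ξ, hξ, hslope⟩ := exists_deriv_eq_slope f (by linarith : r < 2 * r)
      (fun x hx => (hdiff x hx).continuousAt.continuousWithinAt)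
      (fun x hx => (hdiff x (Ioo_subset_Icc_self hx)).differentiableWithinAt)
    have hξε := hbound ξ (Ioo_subset_Icc_self hξ)
    have hdiffξ : f (2 * r) - f r = r * deriv f ξ := by
      rw [hslope]
      field_simp
      ring
    rw [hdiffξ, abs_mul, abs_of_pos hr]
    nlinarith [abs_nonneg (deriv f ξ), hξ.2]
  have hdouble : Tendsto (fun r => 2 * r) (𝓝[>] 0) (𝓝[>] (0 : ℝ)) := by
    refine tendsto_nhdsWithin_iff.mpr ⟨?_, ?_⟩
    · exact ((continuous_const_mul (2 : ℝ)).tendsto' 0 0 (mul_zero 2)).mono_left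
        nhdsWithin_le_nhds
    · filter_upwards [self_mem_nhdsWithin] with r hr using mul_pos two_pos (mem_Ioi.mp hr)
  have hsmall : ∀ᶠ r in 𝓝[>] 0, |f (2 * r) - f r| < ε / 2 := by
    have := ((hf.comp hdouble).sub hf).abs
    rw [sub_self, abs_zero] at this
    exact this.eventually (eventually_lt_nhds (half_pos hε))
  obtain ⟨r, h1, h2⟩ := (hgap.and hsmall).exists
  linarith

theorem eq_zero_of_tendsto_mul_deriv {p : ℝ → ℝ} {y : ℝ} (hp : p =O[𝓝[>] 0] fun r => r)
    (hpf : Tendsto (fun r => p r * deriv f r) (𝓝[>] 0) (𝓝 c)) (hf : Tendsto f (𝓝[>] 0) (𝓝 y)) :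
    c = 0 := by
  by_contra hc
  obtain ⟨C, hC, hCp⟩ := hp.exists_pos
  refine not_tendsto_nhds_of_le_mul_abs_deriv (ε := |c| / 2 / C) (by positivity) ?_ y hf
  filter_upwards [hCp.bound, self_mem_nhdsWithin,
    hpf.abs.eventually (eventually_gt_nhds (half_lt_self (abs_pos.mpr hc)))] with r hpr hr hc'
  rw [Real.norm_eq_abs, Real.norm_eq_abs, abs_of_pos (mem_Ioi.mp hr)] at hpr
  rw [abs_mul] at hc'
  rw [div_le_iff₀ hC]
  nlinarith [abs_nonneg (deriv f r)]

theorem exists_first_nonpos {a b : ℝ} (hab : a ≤ b) (hf : ContinuousOn f (Icc a b))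
    (ha : 0 < f a) (hb : f b ≤ 0) : ∃ c ∈ Ioc a b, f c ≤ 0 ∧ ∀ x ∈ Ico a c, 0 < f x := by
  set Z := Icc a b ∩ f ⁻¹' Iic 0
  have hZ : IsClosed Z := hf.preimage_isClosed_of_isClosed isClosed_Icc isClosed_Iic
  have hbdd : BddBelow Z := ⟨a, fun x hx => hx.1.1⟩
  have hmem : sInf Z ∈ Z := hZ.csInf_mem ⟨b, ⟨⟨hab, le_rfl⟩, hb⟩⟩ hbdd
  refine ⟨sInf Z, ⟨hmem.1.1.lt_of_ne ?_, hmem.1.2⟩, hmem.2, fun x hx => ?_⟩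
  · exact fun h => ha.not_ge (by rw [h]; exact hmem.2)
  · by_contra! hx'
    exact (csInf_le hbdd ⟨⟨hx.1, hx.2.le.trans hmem.1.2⟩, hx'⟩).not_gt hx.2

end Calculus

noncomputable def weightedWronskian (p f g : ℝ → ℝ) (r : ℝ) : ℝ :=
  p r * deriv f r * g r - f r * (p r * deriv g r)

section Wronskian

variable {p f g : ℝ → ℝ}

theorem hasDerivAt_weightedWronskian {r F G : ℝ} (hf : DifferentiableAt ℝ f r)
    (hg : DifferentiableAt ℝ g r) (hpf : HasDerivAt (fun t => p t * deriv f t) F r)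
    (hpg : HasDerivAt (fun t => p t * deriv g t) G r) :
    HasDerivAt (weightedWronskian p f g) (F * g r - f r * G) r :=
  ((hpf.mul hg.hasDerivAt).sub (hf.hasDerivAt.mul hpg)).congr_deriv (by ring)

theorem tendsto_weightedWronskian {l : Filter ℝ} {x y : ℝ}
    (hpf : Tendsto (fun t => p t * deriv f t) l (𝓝 0))
    (hpg : Tendsto (fun t => p t * deriv g t) l (𝓝 0))
    (hf : Tendsto f l (𝓝 x)) (hg : Tendsto g l (𝓝 y)) :
    Tendsto (weightedWronskian p f g) l (𝓝 0) := by
  have h := (hpf.mul hg).sub (hf.mul hpg)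
  rwa [zero_mul, mul_zero, sub_zero] at h

/-- Sturm comparison, through `(f / g)' = W(f, g) / (p g²)`. -/
theorem lt_div_of_tendsto_weightedWronskian {W' : ℝ → ℝ} {a b c : ℝ} (hab : a < b)
    (hf : ∀ r ∈ Ioc a b, DifferentiableAt ℝ f r) (hg : ∀ r ∈ Ioc a b, DifferentiableAt ℝ g r)
    (hg_pos : ∀ r ∈ Ioc a b, 0 < g r) (hp : ∀ r ∈ Ioo a b, 0 < p r)
    (hW : ∀ r ∈ Ioo a b, HasDerivAt (weightedWronskian p f g) (W' r) r)
    (hW' : ∀ r ∈ Ioo a b, 0 < W' r) (hW_lim : Tendsto (weightedWronskian p f g) (𝓝[>] a) (𝓝 0))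
    (hlim : Tendsto (fun r => f r / g r) (𝓝[>] a) (𝓝 c)) : c < f b / g b := by
  have hW_pos : ∀ r ∈ Ioo a b, 0 < weightedWronskian p f g r := fun r hr =>
    lt_of_tendsto_nhdsGT_of_hasDerivAt_pos hr.1 hW_lim
      (fun x hx => hW x ⟨hx.1, hx.2.trans_lt hr.2⟩) (fun x hx => hW' x ⟨hx.1, hx.2.trans hr.2⟩)
  refine lt_of_tendsto_nhdsGT_of_hasDerivAt_pos (f := fun r => f r / g r) hab hlim
    (fun r hr => (hf r hr).hasDerivAt.div (hg r hr).hasDerivAt (hg_pos r hr).ne') fun r hr => ?_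
  have hnum : 0 < p r * (deriv f r * g r - f r * deriv g r) := by
    simpa only [weightedWronskian, mul_sub, mul_assoc, mul_left_comm] using hW_pos r hr
  exact div_pos ((pos_iff_pos_of_mul_pos hnum).mp (hp r hr))
    (pow_pos (hg_pos r (Ioo_subset_Ioc_self hr)) 2)

end Wronskian

theorem hasDerivAt_sinh_div_pow {ρ r : ℝ} (k : ℕ) (hs : sinh (r / ρ) ≠ 0) :
    HasDerivAt (fun t => sinh (t / ρ) ^ k)
      (k / ρ * (cosh (r / ρ) / sinh (r / ρ)) * sinh (r / ρ) ^ k) r := by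
  refine (((hasDerivAt_sinh _).comp r ((hasDerivAt_id r).div_const ρ)).pow k).congr_deriv ?_
  rcases k with _ | k
  · simp
  · simp only [Nat.cast_add, Nat.cast_one, add_tsub_cancel_right, pow_succ, id, Function.comp_apply]
    field_simp

theorem isBigO_sinh_div_pow (ρ : ℝ) {k : ℕ} (hk : k ≠ 0) :
    (fun t => sinh (t / ρ) ^ k) =O[𝓝 0] fun t => t := by
  have hsinh : (fun t => sinh (t / ρ)) =O[𝓝 0] fun t => t := by
    simpa using ((hasDerivAt_sinh _).comp (0 : ℝ) ((hasDerivAt_id 0).div_const ρ)).isBigO_sub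
  refine (hsinh.pow k).trans ?_
  rcases k with _ | _ | k
  · exact absurd rfl hk
  · simpa using isBigO_refl (fun t : ℝ => t) (𝓝 0)
  · exact (isLittleO_pow_id (by omega)).isBigO

structure IsRadialEigenfunction (ρ : ℝ) (k : ℕ) (μ : ℝ) (φ : ℝ → ℝ) : Prop where
  continuousOn : ContinuousOn φ (Ici 0)
  differentiableAt : ∀ r, 0 < r → DifferentiableAt ℝ φ r
  differentiableAt_deriv : ∀ r, 0 < r → DifferentiableAt ℝ (deriv φ) r
  radial_ode : ∀ r, 0 < r →
    deriv (deriv φ) r + ((k : ℝ) / ρ) * (cosh (r / ρ) / sinh (r / ρ)) * deriv φ r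
      + μ * φ r = 0

namespace IsRadialEigenfunction

variable {ρ μ : ℝ} {k : ℕ} {φ : ℝ → ℝ}

theorem tendsto_nhdsGT (hφ : IsRadialEigenfunction ρ k μ φ) :
    Tendsto φ (𝓝[>] 0) (𝓝 (φ 0)) :=
  ((hφ.continuousOn 0 self_mem_Ici).mono Ioi_subset_Ici_self).tendsto

theorem hasDerivAt_sinh_pow_mul_deriv (hφ : IsRadialEigenfunction ρ k μ φ) (hρ : 0 < ρ) {r : ℝ}
    (hr : 0 < r) :
    HasDerivAt (fun t => sinh (t / ρ) ^ k * deriv φ t) (-(μ * (sinh (r / ρ) ^ k * φ r))) r :=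
  ((hasDerivAt_sinh_div_pow k (sinh_pos_iff.mpr (div_pos hr hρ)).ne').mul
    (hφ.differentiableAt_deriv r hr).hasDerivAt).congr_deriv
      (by linear_combination sinh (r / ρ) ^ k * hφ.radial_ode r hr)

theorem tendsto_sinh_pow_mul_deriv (hφ : IsRadialEigenfunction ρ k μ φ) (hρ : 0 < ρ)
    (hk : k ≠ 0) : Tendsto (fun r => sinh (r / ρ) ^ k * deriv φ r) (𝓝[>] 0) (𝓝 0) := by
  have hint : IntegrableOn (fun r => -(μ * (sinh (r / ρ) ^ k * φ r))) (Icc 0 1) := by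
    have hs : Continuous fun r => sinh (r / ρ) ^ k := by fun_prop
    exact ContinuousOn.integrableOn_Icc
      (continuousOn_const.mul (hs.continuousOn.mul (hφ.continuousOn.mono Icc_subset_Ici_self))).neg
  obtain ⟨c, hc⟩ := exists_tendsto_nhdsGT_of_hasDerivAt one_pos
    (fun r hr => hφ.hasDerivAt_sinh_pow_mul_deriv hρ hr.1) hint
  obtain rfl := eq_zero_of_tendsto_mul_deriv
    ((isBigO_sinh_div_pow ρ hk).mono nhdsWithin_le_nhds) hc hφ.tendsto_nhdsGT
  exact hc

theorem hasDerivAt_weightedWronskian_exp (hφ : IsRadialEigenfunction ρ k μ φ) (hρ : 0 < ρ)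
    {r : ℝ} (hr : 0 < r) :
    HasDerivAt (weightedWronskian (fun t => sinh (t / ρ) ^ k) φ fun t => exp (-(k / (2 * ρ)) * t))
      (sinh (r / ρ) ^ k * φ r * exp (-(k / (2 * ρ)) * r) *
        (k ^ 2 / (2 * ρ ^ 2) * (cosh (r / ρ) / sinh (r / ρ)) - k ^ 2 / (4 * ρ ^ 2) - μ)) r := by
  set a : ℝ := k / (2 * ρ)
  have hψ : ∀ t, HasDerivAt (fun t => exp (-a * t)) (-a * exp (-a * t)) t := fun t => by
    simpa [mul_comm] using ((hasDerivAt_id t).const_mul (-a)).exp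
  have hderiv : deriv (fun t => exp (-a * t)) = fun t => -a * exp (-a * t) :=
    funext fun t => (hψ t).deriv
  have hpψ : HasDerivAt (fun t => sinh (t / ρ) ^ k * deriv (fun t => exp (-a * t)) t)
      (k / ρ * (cosh (r / ρ) / sinh (r / ρ)) * sinh (r / ρ) ^ k * (-a * exp (-a * r))
        + sinh (r / ρ) ^ k * (-a * (-a * exp (-a * r)))) r := by
    rw [hderiv]
    exact (hasDerivAt_sinh_div_pow k (sinh_pos_iff.mpr (div_pos hr hρ)).ne').mul
      ((hψ r).const_mul (-a))
  refine (hasDerivAt_weightedWronskian (hφ.differentiableAt r hr) (hψ r).differentiableAt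
    (hφ.hasDerivAt_sinh_pow_mul_deriv hρ hr) hpψ).congr_deriv ?_
  simp only [a]
  field_simp
  ring

theorem pos (hφ : IsRadialEigenfunction ρ k μ φ) (hρ : 0 < ρ) (hk : k ≠ 0)
    (hμ : μ ≤ k ^ 2 / (4 * ρ ^ 2)) (h0 : 0 < φ 0) {r : ℝ} (hr : 0 ≤ r) : 0 < φ r := by
  by_contra! hr'
  obtain ⟨R, hR, hφR, hφ_pos⟩ := exists_first_nonpos hr
    (hφ.continuousOn.mono Icc_subset_Ici_self) h0 hr'
  set ψ : ℝ → ℝ := fun t => exp (-(k / (2 * ρ)) * t)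
  have hψ_lim : Tendsto ψ (𝓝[>] 0) (𝓝 1) := by
    simpa [ψ] using ((by fun_prop : Continuous ψ).tendsto 0).mono_left nhdsWithin_le_nhds
  have hpψ_lim : Tendsto (fun t => sinh (t / ρ) ^ k * deriv ψ t) (𝓝[>] 0) (𝓝 0) := by
    have hc : Continuous fun t => sinh (t / ρ) ^ k * deriv ψ t := by fun_prop
    simpa [hk] using (hc.tendsto 0).mono_left nhdsWithin_le_nhds
  have hW_lim : Tendsto (weightedWronskian (fun t => sinh (t / ρ) ^ k) φ ψ) (𝓝[>] 0) (𝓝 0) :=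
    tendsto_weightedWronskian (hφ.tendsto_sinh_pow_mul_deriv hρ hk) hpψ_lim hφ.tendsto_nhdsGT
      hψ_lim
  have hlt := lt_div_of_tendsto_weightedWronskian hR.1 (fun t ht => hφ.differentiableAt t ht.1)
    (fun t _ => (by fun_prop : Differentiable ℝ ψ) t) (fun t _ => exp_pos _)
    (fun t ht => pow_pos (sinh_pos_iff.mpr (div_pos ht.1 hρ)) k)
    (fun t ht => hφ.hasDerivAt_weightedWronskian_exp hρ ht.1) ?_ hW_lim
    (hφ.tendsto_nhdsGT.div hψ_lim one_ne_zero)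
  · rw [div_one] at hlt
    exact (hlt.trans_le (div_nonpos_of_nonpos_of_nonneg hφR (exp_pos _).le)).not_ge h0.le
  intro t ht
  have hx : 0 < t / ρ := div_pos ht.1 hρ
  have hcoth : 1 < cosh (t / ρ) / sinh (t / ρ) :=
    (one_lt_div (sinh_pos_iff.mpr hx)).mpr (sinh_lt_cosh _)
  -- `coth > 1` makes `exp (-k r / 2ρ)` a strict supersolution
  have hbracket :
      0 < (k : ℝ) ^ 2 / (2 * ρ ^ 2) * (cosh (t / ρ) / sinh (t / ρ)) - k ^ 2 / (4 * ρ ^ 2) - μ := by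
    have hk' : 0 < (k : ℝ) ^ 2 / (2 * ρ ^ 2) := by positivity
    have h2 : (k : ℝ) ^ 2 / (2 * ρ ^ 2) = 2 * (k ^ 2 / (4 * ρ ^ 2)) := by field_simp; ring
    nlinarith
  have := hφ_pos t ⟨ht.1.le, ht.2⟩
  have := pow_pos (sinh_pos_iff.mpr hx) k
  positivity

theorem lt_of_eigenvalue_lt {ν : ℝ} {ψ : ℝ → ℝ} (hφ : IsRadialEigenfunction ρ k μ φ)
    (hψ : IsRadialEigenfunction ρ k ν ψ) (hρ : 0 < ρ) (hk : k ≠ 0) (hμν : μ < ν)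
    (hν : ν ≤ k ^ 2 / (4 * ρ ^ 2)) (h0 : φ 0 = ψ 0) (h0_pos : 0 < ψ 0) {r : ℝ} (hr : 0 < r) :
    ψ r < φ r := by
  have hφ_pos : ∀ t, 0 ≤ t → 0 < φ t := fun t ht =>
    hφ.pos hρ hk (hμν.le.trans hν) (h0 ▸ h0_pos) ht
  have hψ_pos : ∀ t, 0 ≤ t → 0 < ψ t := fun t ht => hψ.pos hρ hk hν h0_pos ht
  have hW_lim : Tendsto (weightedWronskian (fun t => sinh (t / ρ) ^ k) φ ψ) (𝓝[>] 0) (𝓝 0) :=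
    tendsto_weightedWronskian (hφ.tendsto_sinh_pow_mul_deriv hρ hk)
      (hψ.tendsto_sinh_pow_mul_deriv hρ hk) hφ.tendsto_nhdsGT hψ.tendsto_nhdsGT
  have hlt := lt_div_of_tendsto_weightedWronskian hr (fun t ht => hφ.differentiableAt t ht.1)
    (fun t ht => hψ.differentiableAt t ht.1) (fun t ht => hψ_pos t ht.1.le)
    (fun t ht => pow_pos (sinh_pos_iff.mpr (div_pos ht.1 hρ)) k)
    (fun t ht => hasDerivAt_weightedWronskian (hφ.differentiableAt t ht.1)
      (hψ.differentiableAt t ht.1) (hφ.hasDerivAt_sinh_pow_mul_deriv hρ ht.1)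
      (hψ.hasDerivAt_sinh_pow_mul_deriv hρ ht.1))
    (fun t ht => ?_) hW_lim (hφ.tendsto_nhdsGT.div hψ.tendsto_nhdsGT h0_pos.ne')
  · rwa [h0, div_self h0_pos.ne', one_lt_div (hψ_pos r hr.le)] at hlt
  have := pow_pos (sinh_pos_iff.mpr (div_pos ht.1 hρ)) k
  have := hφ_pos t ht.1.le
  have := hψ_pos t ht.1.le
  have : 0 < ν - μ := sub_pos.mpr hμν
  calc (0 : ℝ) < (ν - μ) * sinh (t / ρ) ^ k * φ t * ψ t := by positivity
    _ = _ := by ring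

end IsRadialEigenfunction

/-- One Radius Theorem, real case: if `μ ≠ ν` are real eigenvalues with
`μ, ν ≤ k²/(4ρ²)`, then the corresponding normalized radial eigenfunctions differ at
every positive radius. -/
theorem one_radius_theorem_real
    (ρ : ℝ) (hρ : 0 < ρ) (k : ℕ) (hk : 1 ≤ k)
    (μ ν : ℝ) (hμν : μ ≠ ν)
    (hμle : μ ≤ (k : ℝ) ^ 2 / (4 * ρ ^ 2)) (hνle : ν ≤ (k : ℝ) ^ 2 / (4 * ρ ^ 2))
    (φμ φν : ℝ → ℝ)
    (hcμ : ContinuousOn φμ (Set.Ici 0)) (h0μ : φμ 0 = 1)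
    (hdμ : ∀ r : ℝ, 0 < r → DifferentiableAt ℝ φμ r ∧ DifferentiableAt ℝ (deriv φμ) r)
    (heqμ : ∀ r : ℝ, 0 < r →
      deriv (deriv φμ) r
        + ((k : ℝ) / ρ) * (Real.cosh (r / ρ) / Real.sinh (r / ρ)) * deriv φμ r
        + μ * φμ r = 0)
    (hcν : ContinuousOn φν (Set.Ici 0)) (h0ν : φν 0 = 1)
    (hdν : ∀ r : ℝ, 0 < r → DifferentiableAt ℝ φν r ∧ DifferentiableAt ℝ (deriv φν) r)
    (heqν : ∀ r : ℝ, 0 < r →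
      deriv (deriv φν) r
        + ((k : ℝ) / ρ) * (Real.cosh (r / ρ) / Real.sinh (r / ρ)) * deriv φν r
        + ν * φν r = 0) :
    ∀ r : ℝ, 0 < r → φμ r ≠ φν r := by
  intro r hr
  have hk0 : k ≠ 0 := Nat.one_le_iff_ne_zero.mp hk
  have hφμ : IsRadialEigenfunction ρ k μ φμ :=
    ⟨hcμ, fun r hr => (hdμ r hr).1, fun r hr => (hdμ r hr).2, heqμ⟩
  have hφν : IsRadialEigenfunction ρ k ν φν :=
    ⟨hcν, fun r hr => (hdν r hr).1, fun r hr => (hdν r hr).2, heqν⟩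
  rcases hμν.lt_or_gt with h | h
  · exact (hφμ.lt_of_eigenvalue_lt hφν hρ hk0 h hνle (h0μ.trans h0ν.symm) (h0ν ▸ one_pos) hr).ne'
  · exact (hφν.lt_of_eigenvalue_lt hφμ hρ hk0 h hμle (h0ν.trans h0μ.symm) (h0μ ▸ one_pos) hr).ne
end

section
/- (Explicit radial Dirichlet eigenfunctions in hyperbolic 3-space, k = 2.) Fix ρ > 0 and δ > 0. (i) For every positive integer j, set λ_j = 1/ρ² + (πj/δ)² and define φ_j : ℝ → ℝ by φ_j(r) = δ·sin(πjr/δ)/(πjρ·sinh(r/ρ)) for r ∈ (0, δ] and φ_j(0) = 1. Then φ_j is continuous on [0, δ], φ_j(δ) = 0, and φ_j''(r) + (2/ρ)·coth(r/ρ)·φ_j'(r) + λ_j·φ_j(r) = 0 for all r ∈ (0, δ). (ii) Conversely, if λ ∈ ℝ and φ : ℝ → ℝ is continuous on [0, δ], twice differentiable on (0, δ), satisfies φ(0) = 1, φ(δ) = 0, and φ''(r) + (2/ρ)·coth(r/ρ)·φ'(r) + λ·φ(r) = 0 on (0, δ), then λ = 1/ρ² + (πj/δ)² for some positive integer j. 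-/
/-!
Writing `u = sinh (r / ρ) * φ`, the radial equation `φ'' + (2 / ρ) coth (r / ρ) φ' + λ φ = 0`
becomes `u'' + (λ - 1 / ρ²) u = 0`. For an eigenfunction, `u` vanishes at `0` and at `δ` without
vanishing identically, and comparing `u` with the fundamental solutions of `u'' + μ u = 0` shows
that this happens exactly when `μ = (π j / δ)²` with `j ≥ 1`. Conversely `u = sin (k r)` gives the
eigenfunction `sin (k r) / (k ρ sinh (r / ρ))`, which tends to `1` at `r = 0`.
-/

open Real Set Filter Topology

/-- `c` and `s` play the roles of `cos (√μ x)` and `sin (√μ x) / √μ`, for every sign of `μ`. -/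
structure IsOscillatorBasis (μ : ℝ) (c s : ℝ → ℝ) : Prop where
  hasDerivAt_fst : ∀ x, HasDerivAt c (-μ * s x) x
  hasDerivAt_snd : ∀ x, HasDerivAt s (c x) x
  fst_zero : c 0 = 1
  snd_zero : s 0 = 0

namespace IsOscillatorBasis

variable {μ : ℝ} {c s u : ℝ → ℝ}

theorem sq_add_mul_sq (h : IsOscillatorBasis μ c s) (x : ℝ) : c x ^ 2 + μ * s x ^ 2 = 1 := by
  have hE : ∀ x, HasDerivAt (fun x => c x ^ 2 + μ * s x ^ 2) 0 x := fun x =>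
    (((h.hasDerivAt_fst x).pow 2).add (((h.hasDerivAt_snd x).pow 2).const_mul μ)).congr_deriv
      (by ring)
  simpa [h.fst_zero, h.snd_zero] using
    is_const_of_deriv_eq_zero (fun x => (hE x).differentiableAt) (fun x => (hE x).deriv) x 0

theorem exists_eqOn {t : Set ℝ} (h : IsOscillatorBasis μ c s) (ht : IsOpen t)
    (ht' : IsPreconnected t) (hu : ∀ x ∈ t, DifferentiableAt ℝ u x)
    (hu' : ∀ x ∈ t, HasDerivAt (deriv u) (-μ * u x) x) :
    ∃ a b, EqOn u (fun x => a * c x + b * s x) t := by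
  have hconst : ∀ W : ℝ → ℝ, (∀ x ∈ t, HasDerivAt W 0 x) → ∃ a, ∀ x ∈ t, W x = a :=
    fun W hW => ht.exists_is_const_of_deriv_eq_zero ht'
      (fun x hx => (hW x hx).differentiableAt.differentiableWithinAt) (fun x hx => (hW x hx).deriv)
  -- both Wronskians are conserved, and `c² + μ s² = 1` recovers `u` from them
  obtain ⟨a, ha⟩ := hconst (fun x => u x * c x - deriv u x * s x) fun x hx =>
    (((hu x hx).hasDerivAt.mul (h.hasDerivAt_fst x)).sub
      ((hu' x hx).mul (h.hasDerivAt_snd x))).congr_deriv (by ring)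
  obtain ⟨b, hb⟩ := hconst (fun x => deriv u x * c x + μ * u x * s x) fun x hx =>
    (((hu' x hx).mul (h.hasDerivAt_fst x)).add
      (((hu x hx).hasDerivAt.const_mul μ).mul (h.hasDerivAt_snd x))).congr_deriv (by ring)
  refine ⟨a, b, fun x hx => ?_⟩
  rw [← ha x hx, ← hb x hx]
  linear_combination (-u x) * h.sq_add_mul_sq x

theorem snd_eq_zero_of_dirichlet {δ : ℝ} (h : IsOscillatorBasis μ c s) (hδ : 0 < δ)
    (hu : ∀ x ∈ Ioo 0 δ, DifferentiableAt ℝ u x)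
    (hu' : ∀ x ∈ Ioo 0 δ, HasDerivAt (deriv u) (-μ * u x) x)
    (hcont : ContinuousOn u (Icc 0 δ)) (h0 : u 0 = 0) (hδ0 : u δ = 0)
    (hne : ∃ r ∈ Ioo 0 δ, u r ≠ 0) : s δ = 0 := by
  obtain ⟨a, b, hab⟩ := h.exists_eqOn isOpen_Ioo isPreconnected_Ioo hu hu'
  have hc : Continuous c := continuous_iff_continuousAt.2 fun x => (h.hasDerivAt_fst x).continuousAt
  have hs : Continuous s := continuous_iff_continuousAt.2 fun x => (h.hasDerivAt_snd x).continuousAt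
  have hab' : EqOn u (fun x => a * c x + b * s x) (Icc 0 δ) :=
    hab.of_subset_closure hcont (by fun_prop) Ioo_subset_Icc_self (closure_Ioo hδ.ne).ge
  have ha : 0 = a := by
    simpa [h.fst_zero, h.snd_zero, h0] using hab' (left_mem_Icc.2 hδ.le)
  by_contra hsδ
  have hb : b = 0 := by
    simpa [← ha, hδ0, hsδ] using hab' (right_mem_Icc.2 hδ.le)
  obtain ⟨r, hr, hur⟩ := hne
  simp [hab hr, ← ha, hb] at hur

end IsOscillatorBasis

theorem isOscillatorBasis_cos_sin {ω : ℝ} (hω : ω ≠ 0) :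
    IsOscillatorBasis (ω ^ 2) (fun x => cos (ω * x)) (fun x => sin (ω * x) / ω) where
  hasDerivAt_fst x := (((hasDerivAt_id x).const_mul ω).cos).congr_deriv (by field_simp; simp)
  hasDerivAt_snd x := (((hasDerivAt_id x).const_mul ω).sin.div_const ω).congr_deriv
    (by field_simp; simp)
  fst_zero := by simp
  snd_zero := by simp

theorem isOscillatorBasis_cosh_sinh {ν : ℝ} (hν : ν ≠ 0) :
    IsOscillatorBasis (-ν ^ 2) (fun x => cosh (ν * x)) (fun x => sinh (ν * x) / ν) where
  hasDerivAt_fst x := (((hasDerivAt_id x).const_mul ν).cosh).congr_deriv (by field_simp; simp)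
  hasDerivAt_snd x := (((hasDerivAt_id x).const_mul ν).sinh.div_const ν).congr_deriv
    (by field_simp; simp)
  fst_zero := by simp
  snd_zero := by simp

theorem isOscillatorBasis_one_id : IsOscillatorBasis 0 (fun _ => 1) id where
  hasDerivAt_fst x := (hasDerivAt_const x 1).congr_deriv (by simp)
  hasDerivAt_snd x := hasDerivAt_id x
  fst_zero := rfl
  snd_zero := rfl

theorem exists_nat_eq_sq_of_dirichlet {μ δ : ℝ} {u : ℝ → ℝ} (hδ : 0 < δ)
    (hu : ∀ x ∈ Ioo 0 δ, DifferentiableAt ℝ u x)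
    (hu' : ∀ x ∈ Ioo 0 δ, HasDerivAt (deriv u) (-μ * u x) x)
    (hcont : ContinuousOn u (Icc 0 δ)) (h0 : u 0 = 0) (hδ0 : u δ = 0)
    (hne : ∃ r ∈ Ioo 0 δ, u r ≠ 0) : ∃ j : ℕ, 0 < j ∧ μ = (π * j / δ) ^ 2 := by
  rcases lt_trichotomy μ 0 with hμ | rfl | hμ
  · obtain ⟨ν, hν, rfl⟩ : ∃ ν, 0 < ν ∧ μ = -ν ^ 2 :=
      ⟨√(-μ), sqrt_pos.2 (neg_pos.2 hμ), by rw [sq_sqrt (by linarith)]; ring⟩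
    have := (isOscillatorBasis_cosh_sinh hν.ne').snd_eq_zero_of_dirichlet hδ hu hu' hcont h0 hδ0 hne
    exact ((div_pos (sinh_pos_iff.2 (mul_pos hν hδ)) hν).ne' this).elim
  · have := isOscillatorBasis_one_id.snd_eq_zero_of_dirichlet hδ hu hu' hcont h0 hδ0 hne
    exact absurd this hδ.ne'
  · obtain ⟨ω, hω, rfl⟩ : ∃ ω, 0 < ω ∧ μ = ω ^ 2 := ⟨√μ, by positivity, (sq_sqrt hμ.le).symm⟩
    have := (isOscillatorBasis_cos_sin hω.ne').snd_eq_zero_of_dirichlet hδ hu hu' hcont h0 hδ0 hne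
    obtain ⟨n, hn⟩ := sin_eq_zero_iff.1 (div_eq_zero_iff.1 this |>.resolve_right hω.ne')
    have hn0 : 0 < n := by
      have : (0 : ℝ) < n * π := hn ▸ mul_pos hω hδ
      exact_mod_cast pos_of_mul_pos_left this pi_pos.le
    lift n to ℕ using hn0.le
    refine ⟨n, by exact_mod_cast hn0, ?_⟩
    rw [show ω = π * n / δ by field_simp; push_cast at hn; linarith]

/-- `(Δ + λ) φ` for a radial function `φ (r)` on hyperbolic 3-space of curvature `-1 / ρ²`. -/
noncomputable def radialHelmholtz (ρ lam : ℝ) (φ : ℝ → ℝ) (r : ℝ) : ℝ :=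
  deriv (deriv φ) r + (2 / ρ) * (cosh (r / ρ) / sinh (r / ρ)) * deriv φ r + lam * φ r

theorem hasDerivAt_sinh_div (ρ x : ℝ) :
    HasDerivAt (fun x => sinh (x / ρ)) (cosh (x / ρ) / ρ) x :=
  ((hasDerivAt_id x).div_const ρ).sinh.congr_deriv (by simp [div_eq_mul_inv])

theorem hasDerivAt_deriv_sinh_div_mul {ρ lam r : ℝ} {φ : ℝ → ℝ} (hr : sinh (r / ρ) ≠ 0)
    (hφ : ∀ᶠ x in 𝓝 r, DifferentiableAt ℝ φ x) (hφ' : DifferentiableAt ℝ (deriv φ) r) :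
    HasDerivAt (deriv fun x => sinh (x / ρ) * φ x)
      (sinh (r / ρ) * radialHelmholtz ρ lam φ r - (lam - 1 / ρ ^ 2) * (sinh (r / ρ) * φ r)) r := by
  have hρ : ρ ≠ 0 := by rintro rfl; simp at hr
  have hcosh : HasDerivAt (fun x => cosh (x / ρ) / ρ) (sinh (r / ρ) / ρ / ρ) r :=
    ((hasDerivAt_id r).div_const ρ).cosh.div_const ρ |>.congr_deriv (by simp [div_eq_mul_inv])
  have hderiv : deriv (fun x => sinh (x / ρ) * φ x) =ᶠ[𝓝 r]
      fun x => cosh (x / ρ) / ρ * φ x + sinh (x / ρ) * deriv φ x :=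
    hφ.mono fun x hx => ((hasDerivAt_sinh_div ρ x).mul hx.hasDerivAt).deriv
  refine ((hcosh.mul hφ.self_of_nhds.hasDerivAt).add
    ((hasDerivAt_sinh_div ρ r).mul hφ'.hasDerivAt)).congr_of_eventuallyEq hderiv |>.congr_deriv ?_
  unfold radialHelmholtz
  field_simp
  ring

theorem exists_nat_eq_of_radialHelmholtz_eq_zero {ρ δ lam : ℝ} {φ : ℝ → ℝ} (hρ : 0 < ρ)
    (hδ : 0 < δ) (hcont : ContinuousOn φ (Icc 0 δ))
    (hdiff : ∀ r ∈ Ioo 0 δ, DifferentiableAt ℝ φ r ∧ DifferentiableAt ℝ (deriv φ) r)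
    (h0 : φ 0 = 1) (hδ0 : φ δ = 0) (hφ : ∀ r ∈ Ioo 0 δ, radialHelmholtz ρ lam φ r = 0) :
    ∃ j : ℕ, 0 < j ∧ lam = 1 / ρ ^ 2 + (π * j / δ) ^ 2 := by
  set u : ℝ → ℝ := fun x => sinh (x / ρ) * φ x
  have hsinh : ∀ r ∈ Ioo 0 δ, 0 < sinh (r / ρ) := fun r hr => sinh_pos_iff.2 (div_pos hr.1 hρ)
  have hu : ∀ r ∈ Ioo 0 δ, DifferentiableAt ℝ u r := fun r hr =>
    (hasDerivAt_sinh_div ρ r).differentiableAt.mul (hdiff r hr).1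
  have hu' : ∀ r ∈ Ioo 0 δ, HasDerivAt (deriv u) (-(lam - 1 / ρ ^ 2) * u r) r := by
    intro r hr
    have hφ_near : ∀ᶠ x in 𝓝 r, DifferentiableAt ℝ φ x :=
      eventually_of_mem (isOpen_Ioo.mem_nhds hr) fun x hx => (hdiff x hx).1
    have := hasDerivAt_deriv_sinh_div_mul (lam := lam) (hsinh r hr).ne' hφ_near (hdiff r hr).2
    rw [hφ r hr, mul_zero, zero_sub, ← neg_mul] at this
    exact this
  have hcont_u : ContinuousOn u (Icc 0 δ) := (continuous_sinh.comp
    (continuous_id.div_const ρ)).continuousOn.mul hcont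
  have hne : ∃ r ∈ Ioo 0 δ, u r ≠ 0 := by
    have hpos : ∀ᶠ x in 𝓝[Ioo 0 δ] 0, 0 < φ x :=
      ((hcont 0 (left_mem_Icc.2 hδ.le)).mono Ioo_subset_Icc_self).eventually
        (h0 ▸ eventually_gt_nhds one_pos)
    have : (𝓝[Ioo 0 δ] (0 : ℝ)).NeBot := left_nhdsWithin_Ioo_neBot hδ
    obtain ⟨r, hφr, hr⟩ := (hpos.and self_mem_nhdsWithin).exists
    exact ⟨r, hr, (mul_pos (hsinh r hr) hφr).ne'⟩
  obtain ⟨j, hj, hμ⟩ :=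
    exists_nat_eq_sq_of_dirichlet hδ hu hu' hcont_u (by simp [u]) (by simp [u, hδ0]) hne
  exact ⟨j, hj, by linarith⟩

theorem tendsto_div_nhdsNE_of_hasDerivAt {𝕜 : Type*} [NontriviallyNormedField 𝕜] {f g : 𝕜 → 𝕜}
    {a b x : 𝕜} (hf : HasDerivAt f a x) (hg : HasDerivAt g b x) (hf0 : f x = 0) (hg0 : g x = 0)
    (hb : b ≠ 0) : Tendsto (fun y => f y / g y) (𝓝[≠] x) (𝓝 (a / b)) :=
  (hf.tendsto_slope.div hg.tendsto_slope hb).congr' <| eventually_nhdsWithin_of_forall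
    fun y hy => by
      show slope f x y / slope g x y = _
      simp only [slope_def_field, hf0, hg0, sub_zero]
      exact div_div_div_cancel_right₀ (sub_ne_zero.2 hy) _ _

noncomputable def radialEigenfunction (ρ k : ℝ) (r : ℝ) : ℝ :=
  if r = 0 then 1 else sin (k * r) / (k * ρ * sinh (r / ρ))

section radialEigenfunction

variable {ρ k : ℝ}

theorem contDiffOn_radialEigenfunction (hρ : ρ ≠ 0) (hk : k ≠ 0) :
    ContDiffOn ℝ 2 (radialEigenfunction ρ k) {0}ᶜ := by
  have : ContDiffOn ℝ 2 (fun r => sin (k * r) / (k * ρ * sinh (r / ρ))) {0}ᶜ :=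
    ContDiffOn.div (by fun_prop) (by fun_prop) fun r hr =>
      mul_ne_zero (mul_ne_zero hk hρ) (sinh_ne_zero.2 (div_ne_zero hr hρ))
  exact this.congr fun r hr => if_neg hr

theorem continuous_radialEigenfunction (hρ : ρ ≠ 0) (hk : k ≠ 0) :
    Continuous (radialEigenfunction ρ k) := by
  refine continuous_iff_continuousAt.2 fun x => ?_
  rcases eq_or_ne x 0 with rfl | hx
  · have hsin : HasDerivAt (fun r => sin (k * r)) k 0 :=
      ((hasDerivAt_id 0).const_mul k).sin.congr_deriv (by simp)
    have hsinh : HasDerivAt (fun r => k * ρ * sinh (r / ρ)) k 0 :=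
      ((hasDerivAt_sinh_div ρ 0).const_mul (k * ρ)).congr_deriv (by field_simp; simp)
    have := tendsto_div_nhdsNE_of_hasDerivAt hsin hsinh (by simp) (by simp) hk
    have h0 : radialEigenfunction ρ k 0 = 1 := if_pos rfl
    rw [div_self hk] at this
    rw [← continuousWithinAt_compl_self, ContinuousWithinAt, h0]
    exact this.congr' (eventually_nhdsWithin_of_forall fun r hr => (if_neg hr).symm)
  · exact (contDiffOn_radialEigenfunction hρ hk).continuousOn.continuousAt
      (isOpen_compl_singleton.mem_nhds hx)

theorem radialHelmholtz_radialEigenfunction (hρ : ρ ≠ 0) (hk : k ≠ 0) {r : ℝ} (hr : r ≠ 0) :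
    radialHelmholtz ρ (1 / ρ ^ 2 + k ^ 2) (radialEigenfunction ρ k) r = 0 := by
  have hsinh : ∀ x ≠ 0, sinh (x / ρ) ≠ 0 := fun x hx => sinh_ne_zero.2 (div_ne_zero hx hρ)
  have hnhds : {0}ᶜ ∈ 𝓝 r := isOpen_compl_singleton.mem_nhds hr
  have hsmooth := contDiffOn_radialEigenfunction hρ hk
  have hφ : ∀ᶠ x in 𝓝 r, DifferentiableAt ℝ (radialEigenfunction ρ k) x :=
    eventually_of_mem hnhds fun x hx =>
      (hsmooth.differentiableOn two_ne_zero x hx).differentiableAt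
        (isOpen_compl_singleton.mem_nhds hx)
  have hφ' : DifferentiableAt ℝ (deriv (radialEigenfunction ρ k)) r :=
    ((hsmooth.deriv_of_isOpen isOpen_compl_singleton (m := 1) le_rfl).differentiableOn
      one_ne_zero r hr).differentiableAt hnhds
  have hu : (fun x => sinh (x / ρ) * radialEigenfunction ρ k x) =ᶠ[𝓝 r]
      fun x => sin (k * x) / (k * ρ) :=
    eventually_of_mem hnhds fun x hx => by
      have := hsinh x hx
      simp only [radialEigenfunction, if_neg (show x ≠ 0 from hx)]
      field_simp
  have hsin_deriv : deriv (fun x => sin (k * x) / (k * ρ)) = fun x => cos (k * x) / ρ := by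
    funext x
    refine (((hasDerivAt_id x).const_mul k).sin.div_const (k * ρ)).congr_deriv ?_ |>.deriv
    field_simp
    simp
  have hsin_deriv2 : HasDerivAt (fun x => cos (k * x) / ρ) (-k ^ 2 * (sin (k * r) / (k * ρ))) r :=
    (((hasDerivAt_id r).const_mul k).cos.div_const ρ).congr_deriv (by field_simp; simp)
  have := (hasDerivAt_deriv_sinh_div_mul (lam := 1 / ρ ^ 2 + k ^ 2) (hsinh r hr) hφ hφ').unique
    ((hsin_deriv ▸ hsin_deriv2).congr_of_eventuallyEq hu.deriv)
  have hur : sinh (r / ρ) * radialEigenfunction ρ k r = sin (k * r) / (k * ρ) := hu.self_of_nhds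
  exact (mul_eq_zero.1 (by linear_combination this + k ^ 2 * hur)).resolve_left (hsinh r hr)

end radialEigenfunction

/-- Explicit radial Dirichlet eigenfunctions in hyperbolic 3-space (`k = 2`):
(i) for every positive integer `j`, `λ_j = 1/ρ² + (πj/δ)²` and
`φ_j(r) = δ sin(πjr/δ)/(πjρ sinh(r/ρ))` (with `φ_j(0) = 1`) is a continuous solution on
`[0, δ]` of the radial eigenvalue equation vanishing at `δ`;
(ii) conversely, every real eigenvalue of this radial Dirichlet problem is of this form. -/
theorem explicit_dirichlet_eigenfunctions_dim_three
    (ρ δ : ℝ) (hρ : 0 < ρ) (hδ : 0 < δ) :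
    (∀ j : ℕ, 0 < j →
      ContinuousOn
          (fun r : ℝ => if r = 0 then 1
            else δ * Real.sin (π * j * r / δ) / (π * j * ρ * Real.sinh (r / ρ)))
          (Set.Icc 0 δ)
        ∧ (fun r : ℝ => if r = 0 then 1
            else δ * Real.sin (π * j * r / δ) / (π * j * ρ * Real.sinh (r / ρ))) δ = 0
        ∧ ∀ r ∈ Set.Ioo (0 : ℝ) δ,
            deriv (deriv (fun r : ℝ => if r = 0 then 1
              else δ * Real.sin (π * j * r / δ) / (π * j * ρ * Real.sinh (r / ρ)))) r
              + (2 / ρ) * (Real.cosh (r / ρ) / Real.sinh (r / ρ))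
                * deriv (fun r : ℝ => if r = 0 then 1
                    else δ * Real.sin (π * j * r / δ) / (π * j * ρ * Real.sinh (r / ρ))) r
              + (1 / ρ ^ 2 + (π * j / δ) ^ 2)
                * (if r = 0 then 1
                    else δ * Real.sin (π * j * r / δ) / (π * j * ρ * Real.sinh (r / ρ))) = 0)
    ∧ (∀ (lam : ℝ) (φ : ℝ → ℝ),
        ContinuousOn φ (Set.Icc 0 δ) →
        (∀ r ∈ Set.Ioo (0 : ℝ) δ,
          DifferentiableAt ℝ φ r ∧ DifferentiableAt ℝ (deriv φ) r) →
        φ 0 = 1 → φ δ = 0 →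
        (∀ r ∈ Set.Ioo (0 : ℝ) δ,
          deriv (deriv φ) r
            + (2 / ρ) * (Real.cosh (r / ρ) / Real.sinh (r / ρ)) * deriv φ r
            + lam * φ r = 0) →
        ∃ j : ℕ, 0 < j ∧ lam = 1 / ρ ^ 2 + (π * j / δ) ^ 2) := by
  refine ⟨fun j hj => ?_, fun lam φ hcont hdiff h0 hδ0 hφ =>
    exists_nat_eq_of_radialHelmholtz_eq_zero hρ hδ hcont hdiff h0 hδ0 hφ⟩
  have hk : π * j / δ ≠ 0 := by positivity
  have heq : ∀ r, (if r = 0 then 1 else δ * sin (π * j * r / δ) / (π * j * ρ * sinh (r / ρ))) =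
      radialEigenfunction ρ (π * j / δ) r := fun r => by
    unfold radialEigenfunction
    split_ifs
    · rfl
    · rw [div_mul_eq_mul_div]
      field_simp
  simp only [heq]
  refine ⟨(continuous_radialEigenfunction hρ.ne' hk).continuousOn, ?_,
    fun r hr => radialHelmholtz_radialEigenfunction hρ.ne' hk hr.1.ne'⟩
  have hsin : sin (π * j) = 0 := by rw [mul_comm, sin_nat_mul_pi]
  simp [radialEigenfunction, hδ.ne', hsin]
end
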